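/- arXiv:2603.29447 — 15 statements merged into one kernel-verified Lean document; each statement's English description precedes it below -/
import Mathlib

section
/- Let V be a vector space over a field k, let ψ : V × V → V be a bilinear map, and let d : V → V be a derivation of (V, ψ), i.e. d(ψ(x,y)) = ψ(d x, y) + ψ(x, d y) for all x, y ∈ V. Set D = d ∘ d. Then for every n ≥ 0 and all x, y ∈ V the n-th derived operation of ψ with respect to D satisfies ψ^{(n)}_D(x,y) = 2^n · ψ(d^n x, d^n y). -/
/-- The derived operation of a binary operation `ψ` with respect to a map `D`:
`ψ'_D(x,y) = D(ψ(x,y)) − ψ(Dx,y) − ψ(x,Dy)`. -/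
def derivedOp {V : Type*} [AddCommGroup V] (D : V → V) :
    (V → V → V) → (V → V → V) :=
  fun ψ x y => D (ψ x y) - ψ (D x) y - ψ x (D y)

/-- If `d` is a derivation of the (bilinear) operation `ψ` and `D = d ∘ d`, then the `n`-th
derived operation satisfies `ψ^{(n)}_D(x,y) = 2^n • ψ(dⁿ x, dⁿ y)`. -/
theorem square_of_derivation_nth_derived
    {k : Type*} [Field k] {V : Type*} [AddCommGroup V] [Module k V]
    (ψ : V →ₗ[k] V →ₗ[k] V) (d : V →ₗ[k] V)
    (hd : ∀ x y : V, d (ψ x y) = ψ (d x) y + ψ x (d y)) :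
    ∀ (n : ℕ) (x y : V),
      (derivedOp (fun v => d (d v)))^[n] (fun x y => ψ x y) x y
        = (2 : k) ^ n • ψ ((⇑d)^[n] x) ((⇑d)^[n] y) := by
  intro n
  induction n with
  | zero => intro x y; simp
  | succ n ih =>
    intro x y
    rw [Function.iterate_succ_apply']
    have hx : (⇑d)^[n] (d (d x)) = d (d ((⇑d)^[n] x)) := by
      rw [← Function.iterate_succ_apply, ← Function.iterate_succ_apply,
          Function.iterate_succ_apply', Function.iterate_succ_apply']
    have hy : (⇑d)^[n] (d (d y)) = d (d ((⇑d)^[n] y)) := by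
      rw [← Function.iterate_succ_apply, ← Function.iterate_succ_apply,
          Function.iterate_succ_apply', Function.iterate_succ_apply']
    simp only [derivedOp, ih, hx, hy]
    set a := (⇑d)^[n] x with ha
    set b := (⇑d)^[n] y with hb
    rw [Function.iterate_succ_apply', Function.iterate_succ_apply', ← ha, ← hb]
    rw [map_smul, map_smul, hd, map_add, hd, hd]
    rw [pow_succ]
    rw [mul_smul, smul_smul, mul_comm]
    module
end

section
/- Let V be a vector space over a field k of characteristic ≠ 2, let ψ : V × V → V be a bilinear map, and let d : V → V be a derivation of (V, ψ), i.e. d(ψ(x,y)) = ψ(d x, y) + ψ(x, d y) for all x, y. Set D = d ∘ d. Then D is a quasi-derivation of (V, ψ) (i.e. ψ''_D = 0) if and only if ψ(u, v) = 0 for all u, v in the image of D. -/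
/-- For a derivation `d` of `(V, ψ)` and `D = d ∘ d` (char k ≠ 2), `D` is a quasi-derivation
of `(V, ψ)` iff `ψ` vanishes on the image of `D`. -/
theorem square_of_derivation_quasi_iff
    {k : Type*} [Field k] {V : Type*} [AddCommGroup V] [Module k V]
    (h2 : (2 : k) ≠ 0)
    (ψ : V →ₗ[k] V →ₗ[k] V) (d : V →ₗ[k] V)
    (hd : ∀ x y : V, d (ψ x y) = ψ (d x) y + ψ x (d y)) :
    (derivedOp (fun v => d (d v)))^[2] (fun x y => ψ x y) = (fun _ _ => (0 : V)) ↔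
      ∀ u ∈ Set.range (fun v => d (d v)), ∀ v ∈ Set.range (fun v => d (d v)),
        ψ u v = 0 := by
  have key : ∀ x y : V,
      (derivedOp (fun v => d (d v)))^[2] (fun x y => ψ x y) x y
        = (4 : ℤ) • ψ (d (d x)) (d (d y)) := by
    intro x y
    simp only [Function.iterate_succ, Function.iterate_zero, Function.comp_apply, id_eq,
      derivedOp]
    simp only [hd, map_add, map_sub, LinearMap.add_apply, LinearMap.sub_apply,
      LinearMap.map_add, LinearMap.map_sub]
    abel
  have h4 : (4 : ℤ) • (0 : V) = (0 : V) := smul_zero _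
  constructor
  · intro h u hu v hv
    obtain ⟨a, rfl⟩ := hu
    obtain ⟨b, rfl⟩ := hv
    have := key a b
    rw [h] at this
    have h4k : ((4 : ℤ) : k) ≠ 0 := by
      have : ((4 : ℤ) : k) = 2 * 2 := by push_cast; ring
      rw [this]; exact mul_ne_zero h2 h2
    have : ((4 : ℤ) : k) • ψ (d (d a)) (d (d b)) = 0 := by
      rw [Int.cast_smul_eq_zsmul]; exact this.symm
    exact (smul_eq_zero.mp this).resolve_left h4k
  · intro h
    funext x y
    rw [key x y, h _ ⟨x, rfl⟩ _ ⟨y, rfl⟩, smul_zero]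
end

section
/- Let V be a vector space over a field k, ψ : V × V → V a bilinear map, D : V → V an arbitrary linear map, and d : V → V a derivation of (V, ψ), i.e. d(ψ(x,y)) = ψ(d x, y) + ψ(x, d y) for all x, y. Then ψ'_{D+d} = ψ'_D, and ψ''_{D+d} = ψ''_D + ψ'_{[d,D]}, where [d,D] = d ∘ D − D ∘ d. -/
/-- For any linear `D` and any derivation `d` of `(V, ψ)`, one has `ψ'_{D+d} = ψ'_D`
and `ψ''_{D+d} = ψ''_D + ψ'_{[d,D]}`, where `[d,D] = d∘D − D∘d`. -/
theorem derived_of_sum_with_derivation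
    {k : Type*} [Field k] {V : Type*} [AddCommGroup V] [Module k V]
    (ψ : V →ₗ[k] V →ₗ[k] V) (D d : V →ₗ[k] V)
    (hd : ∀ x y : V, d (ψ x y) = ψ (d x) y + ψ x (d y)) :
    (derivedOp (fun v => D v + d v) (fun x y => ψ x y)
        = derivedOp ⇑D (fun x y => ψ x y)) ∧
    ((derivedOp (fun v => D v + d v))^[2] (fun x y => ψ x y)
        = fun x y => (derivedOp ⇑D)^[2] (fun x y => ψ x y) x y
            + derivedOp (fun v => d (D v) - D (d v)) (fun x y => ψ x y) x y) := by
  have h1 : (derivedOp (fun v => D v + d v) (fun x y => ψ x y)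
      = derivedOp ⇑D (fun x y => ψ x y)) := by
    funext x y
    simp only [derivedOp, map_add, LinearMap.add_apply, hd]
    abel
  refine ⟨h1, ?_⟩
  have h2 : ∀ (E : V → V) (f : V → V → V), (derivedOp E)^[2] f = derivedOp E (derivedOp E f) :=
    fun _ _ => rfl
  rw [h2, h2, h1]
  funext x y
  simp only [derivedOp, map_add, map_sub, LinearMap.add_apply, LinearMap.sub_apply, hd]
  abel
end

section
/- Let V be a vector space over a field k, ψ : V × V → V a bilinear map, and D : V → V a linear map with ψ''_D = a·ψ + b·ψ'_D for some a, b ∈ k. Let λ₁, λ₂ ∈ k satisfy λ₁ + λ₂ = b and λ₁λ₂ = −a, and set D₁ = D + λ₁·id_V. Then ψ'_{D₁} = ψ'_D − λ₁·ψ and ψ''_{D₁} = (λ₂ − λ₁)·ψ'_{D₁}. In particular, if λ₁ = λ₂ then D₁ is a quasi-derivation of (V, ψ). -/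
/-- Normalisation of a near-derivation: if `ψ''_D = a•ψ + b•ψ'_D`, `λ₁ + λ₂ = b`,
`λ₁λ₂ = −a`, and `D₁ = D + λ₁·id`, then `ψ'_{D₁} = ψ'_D − λ₁•ψ` and
`ψ''_{D₁} = (λ₂ − λ₁)•ψ'_{D₁}`; in particular, if `λ₁ = λ₂` then `D₁` is a
quasi-derivation. -/
theorem near_derivation_normalisation
    {k : Type*} [Field k] {V : Type*} [AddCommGroup V] [Module k V]
    (ψ : V →ₗ[k] V →ₗ[k] V) (D : V →ₗ[k] V) (a b lam1 lam2 : k)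
    (hnear : ∀ x y : V,
      (derivedOp ⇑D)^[2] (fun x y => ψ x y) x y
        = a • ψ x y + b • derivedOp ⇑D (fun x y => ψ x y) x y)
    (hsum : lam1 + lam2 = b) (hprod : lam1 * lam2 = -a) :
    (∀ x y : V,
      derivedOp (fun v => D v + lam1 • v) (fun x y => ψ x y) x y
        = derivedOp ⇑D (fun x y => ψ x y) x y - lam1 • ψ x y) ∧
    (∀ x y : V,
      (derivedOp (fun v => D v + lam1 • v))^[2] (fun x y => ψ x y) x y
        = (lam2 - lam1) • derivedOp (fun v => D v + lam1 • v) (fun x y => ψ x y) x y) ∧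
    (lam1 = lam2 →
      (derivedOp (fun v => D v + lam1 • v))^[2] (fun x y => ψ x y)
        = fun _ _ => (0 : V)) := by
  subst hsum
  have ha : a = -(lam1 * lam2) := by linear_combination hprod
  subst ha
  have h1 : ∀ x y : V,
      derivedOp (fun v => D v + lam1 • v) (fun x y => ψ x y) x y
        = derivedOp ⇑D (fun x y => ψ x y) x y - lam1 • ψ x y := by
    intro x y
    simp only [derivedOp, map_add, map_smul, LinearMap.add_apply, LinearMap.smul_apply]
    module
  have h2 : ∀ x y : V,
      (derivedOp (fun v => D v + lam1 • v))^[2] (fun x y => ψ x y) x y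
        = (lam2 - lam1) • derivedOp (fun v => D v + lam1 • v) (fun x y => ψ x y) x y := by
    intro x y
    have h := hnear x y
    simp only [Function.iterate_succ, Function.iterate_zero, Function.comp_apply, id_eq,
      derivedOp, map_add, map_smul, map_sub, LinearMap.add_apply, LinearMap.smul_apply,
      LinearMap.sub_apply, LinearMap.map_smul₂, LinearMap.map_sub₂, LinearMap.map_add₂] at h ⊢
    linear_combination (norm := module) h
  refine ⟨h1, h2, fun hl => ?_⟩
  funext x y
  rw [h2 x y, hl, sub_self, zero_smul]
end

section
/- Let q be a finite-dimensional Lie algebra over a field k of characteristic 0 and let D : q → q be a near-derivation of q, i.e. [·,·]''_D = a·[·,·] + b·[·,·]'_D for some scalars a, b ∈ k. Then for all α, β ∈ k the bilinear map (x,y) ↦ α[x,y] + β[x,y]'_D is a Lie bracket on the vector space q (it is alternating and satisfies the Jacobi identity). In particular, [·,·]'_D is a Lie bracket and the brackets [·,·] and [·,·]'_D are compatible. -/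
/-- A binary operation is a Lie bracket if it is alternating and satisfies the Jacobi
identity. -/
def IsLieBracket {V : Type*} [AddCommGroup V] (B : V → V → V) : Prop :=
  (∀ x : V, B x x = 0) ∧
  (∀ x y z : V, B (B x y) z + B (B y z) x + B (B z x) y = 0)

private theorem jacS {L : Type*} [LieRing L] (x y z : L) :
    ⁅⁅x,y⁆,z⁆ + ⁅⁅y,z⁆,x⁆ + ⁅⁅z,x⁆,y⁆ = (0:L) := by
  have h := lie_jacobi z x y
  rw [← lie_skew ⁅x,y⁆ z, ← lie_skew ⁅y,z⁆ x, ← lie_skew ⁅z,x⁆ y,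
    ← neg_add, ← neg_add, h, neg_zero]

/-- If `D` is a near-derivation of a finite-dimensional Lie algebra `L` over a field of
characteristic zero, then every linear combination `α[·,·] + β[·,·]'_D` is a Lie bracket;
in particular `[·,·]'_D` is a Lie bracket and `[·,·]`, `[·,·]'_D` are compatible. -/
theorem near_derivation_pencil_of_Lie_brackets
    {k : Type*} [Field k] [CharZero k] {L : Type*} [LieRing L] [LieAlgebra k L]
    [FiniteDimensional k L]
    (D : L →ₗ[k] L)
    (hnear : ∃ a b : k, ∀ x y : L,
      (derivedOp ⇑D)^[2] (fun x y => ⁅x, y⁆) x y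
        = a • ⁅x, y⁆ + b • derivedOp ⇑D (fun x y => ⁅x, y⁆) x y) :
    ∀ α β : k,
      IsLieBracket
        (fun x y => α • ⁅x, y⁆ + β • derivedOp ⇑D (fun x y => ⁅x, y⁆) x y) := by
  obtain ⟨a, b, hab⟩ := hnear
  set f : L → L → L := derivedOp ⇑D (fun x y => ⁅x, y⁆) with hf
  have h0 : ∀ x y : L, f x y = D ⁅x,y⁆ - ⁅D x, y⁆ - ⁅x, D y⁆ := fun _ _ => rfl
  -- the near-derivation identity
  have hf2 : ∀ x y : L, D (f x y) - f (D x) y - f x (D y) = a • ⁅x,y⁆ + b • f x y := by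
    intro x y
    have := hab x y
    rw [show (derivedOp ⇑D)^[2] (fun x y : L => ⁅x, y⁆) = derivedOp ⇑D f from rfl] at this
    exact this
  have hDf : ∀ x y : L, D (f x y) = a • ⁅x,y⁆ + b • f x y + f (D x) y + f x (D y) := by
    intro x y
    have h := hf2 x y
    have e : D (f x y) = (D (f x y) - f (D x) y - f x (D y)) + f (D x) y + f x (D y) := by
      abel
    rw [e, h]
  -- additivity / homogeneity of f in the first and second slots
  have faddL : ∀ u v z : L, f (u + v) z = f u z + f v z := by
    intro u v z; simp only [h0, add_lie, map_add]; abel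
  have faddR : ∀ z u v : L, f z (u + v) = f z u + f z v := by
    intro z u v; simp only [h0, lie_add, map_add]; abel
  have fsmulL : ∀ (c : k) (u z : L), f (c • u) z = c • f u z := by
    intro c u z; simp only [h0, smul_lie, lie_smul, map_smul, smul_sub]
  have fsmulR : ∀ (c : k) (u z : L), f z (c • u) = c • f z u := by
    intro c u z; simp only [h0, smul_lie, lie_smul, map_smul, smul_sub]
  -- abbreviations
  set S : L → L → L → L := fun x y z => ⁅f x y, z⁆ + ⁅f y z, x⁆ + ⁅f z x, y⁆ with hS
  set T : L → L → L → L := fun x y z => f ⁅x,y⁆ z + f ⁅y,z⁆ x + f ⁅z,x⁆ y with hT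
  set J : L → L → L → L := fun x y z => f (f x y) z + f (f y z) x + f (f z x) y with hJ
  -- mixed Jacobiator vanishes
  have hM : ∀ x y z : L, S x y z + T x y z = 0 := by
    intro x y z
    have e : S x y z + T x y z
        = D (⁅⁅x,y⁆,z⁆ + ⁅⁅y,z⁆,x⁆ + ⁅⁅z,x⁆,y⁆)
          - (⁅⁅D x,y⁆,z⁆ + ⁅⁅y,z⁆,D x⁆ + ⁅⁅z,D x⁆,y⁆)
          - (⁅⁅x,D y⁆,z⁆ + ⁅⁅D y,z⁆,x⁆ + ⁅⁅z,x⁆,D y⁆)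
          - (⁅⁅x,y⁆,D z⁆ + ⁅⁅y,D z⁆,x⁆ + ⁅⁅D z,x⁆,y⁆) := by
      simp only [hS, hT, h0, sub_lie, map_add, map_sub]
      abel
    rw [e, jacS, jacS, map_zero]
    have j2 : ⁅⁅x,D y⁆,z⁆ + ⁅⁅D y,z⁆,x⁆ + ⁅⁅z,x⁆,D y⁆ = (0:L) := by
      have := jacS (D y) z x; rw [← this]; abel
    have j3 : ⁅⁅x,y⁆,D z⁆ + ⁅⁅y,D z⁆,x⁆ + ⁅⁅D z,x⁆,y⁆ = (0:L) := by
      have := jacS (D z) x y; rw [← this]; abel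
    rw [j2, j3]; abel
  have hSnegT : ∀ x y z : L, S x y z = -T x y z := fun x y z =>
    eq_neg_of_add_eq_zero_left (hM x y z)
  have hDxy : ∀ x y : L, D ⁅x,y⁆ = f x y + ⁅D x, y⁆ + ⁅x, D y⁆ := by
    intro x y; rw [h0]; abel
  -- expansion of f (f x y) z
  have hterm : ∀ x y z : L, f (f x y) z
      = D ⁅f x y, z⁆ - (a • ⁅⁅x,y⁆,z⁆ + b • ⁅f x y, z⁆ + ⁅f (D x) y, z⁆ + ⁅f x (D y), z⁆)
        - ⁅f x y, D z⁆ := by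
    intro x y z
    rw [h0 (f x y) z, hDf x y]
    simp only [add_lie, smul_lie]
  -- equation (A)
  have hA : ∀ x y z : L, J x y z
      = D (S x y z) - b • S x y z - (S (D x) y z + S x (D y) z + S x y (D z)) := by
    intro x y z
    have e : J x y z
        = D (S x y z) - b • S x y z - (S (D x) y z + S x (D y) z + S x y (D z))
          - a • (⁅⁅x,y⁆,z⁆ + ⁅⁅y,z⁆,x⁆ + ⁅⁅z,x⁆,y⁆) := by
      simp only [hJ, hS, hterm, map_add, smul_add]
      module
    rw [e, jacS, smul_zero, sub_zero]
  -- expansion of D (f ⁅x,y⁆ z)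
  have hterm2 : ∀ x y z : L, D (f ⁅x,y⁆ z)
      = a • ⁅⁅x,y⁆,z⁆ + b • f ⁅x,y⁆ z + f (f x y) z + f ⁅D x,y⁆ z + f ⁅x,D y⁆ z
        + f ⁅x,y⁆ (D z) := by
    intro x y z
    rw [hDf ⁅x,y⁆ z, hDxy x y, faddL, faddL]
    abel
  -- equation (B)
  have hB : ∀ x y z : L, J x y z
      = D (T x y z) - b • T x y z - (T (D x) y z + T x (D y) z + T x y (D z)) := by
    intro x y z
    have e : J x y z
        = D (T x y z) - b • T x y z - (T (D x) y z + T x (D y) z + T x y (D z))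
          - a • (⁅⁅x,y⁆,z⁆ + ⁅⁅y,z⁆,x⁆ + ⁅⁅z,x⁆,y⁆) := by
      simp only [hJ, hT, map_add, smul_add, hterm2]
      module
    rw [e, jacS, smul_zero, sub_zero]
  -- the Jacobiator of the derived bracket vanishes
  have hJ0 : ∀ x y z : L, J x y z = 0 := by
    intro x y z
    have h1 := hA x y z
    rw [hSnegT x y z, hSnegT (D x) y z, hSnegT x (D y) z, hSnegT x y (D z),
      map_neg, smul_neg] at h1
    have hAB : J x y z + J x y z = 0 := by
      nth_rewrite 1 [h1]
      rw [hB x y z]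
      abel
    have h2 : (2 : k) • J x y z = 0 := by rw [two_smul]; exact hAB
    rcases smul_eq_zero.mp h2 with h | h
    · exact absurd h two_ne_zero
    · exact h
  -- final assembly
  intro α β
  constructor
  · intro x
    simp only [h0, lie_self, map_zero, zero_sub, smul_zero, zero_add]
    rw [← lie_skew (D x) x]
    simp
  · intro x y z
    simp only []
    have e : (α • ⁅α • ⁅x,y⁆ + β • f x y, z⁆ + β • f (α • ⁅x,y⁆ + β • f x y) z)
        + (α • ⁅α • ⁅y,z⁆ + β • f y z, x⁆ + β • f (α • ⁅y,z⁆ + β • f y z) x)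
        + (α • ⁅α • ⁅z,x⁆ + β • f z x, y⁆ + β • f (α • ⁅z,x⁆ + β • f z x) y)
        = (α * α) • (⁅⁅x,y⁆,z⁆ + ⁅⁅y,z⁆,x⁆ + ⁅⁅z,x⁆,y⁆)
          + (α * β) • (S x y z + T x y z) + (β * β) • J x y z := by
      simp only [faddL, fsmulL, add_lie, smul_lie, hS, hT, hJ, smul_add]
      module
    rw [e, jacS, hM, hJ0]
    simp
end

section
/- Let q be a Lie algebra over a field k and n ≥ 2 an integer. Suppose q = q₀ ⊕ q₁ ⊕ … ⊕ q_{n−1} is a direct sum of subspaces such that [q_i, q_j] ⊆ q_{i+j} whenever i + j ≤ n − 1 and [q_i, q_j] ⊆ q_{i+j−n} whenever i + j ≥ n (a ℤ_n-grading of q). Define the linear map D : q → q by D(x) = i·x for x ∈ q_i. Then for x ∈ q_i and y ∈ q_j one has [x,y]'_D = 0 if i + j < n and [x,y]'_D = −n·[x,y] if i + j ≥ n; moreover [·,·]''_D = −n·[·,·]'_D, so D is a near-derivation of q. -/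
/-!
On `q_i` the map `D` is multiplication by `i`, and the bracket of `q_i` with `q_j` lands in
degree `i + j` or `i + j - n`. So for homogeneous `x, y` the bracket `[x,y]` is a `D`-eigenvector
whose eigenvalue differs from `i + j` by `s ∈ {0, -n}`, whence `[x,y]'_D = s [x,y]`. This is again
an eigenvector with the same eigenvalue, so `[x,y]''_D = s [x,y]'_D = -n [x,y]'_D`; both sides are
bilinear, so the identity extends from homogeneous elements to all of `q`.
-/

section Bilinear

variable {R M : Type*} [CommRing R] [AddCommGroup M] [Module R M]

def derivedBilin (D : M →ₗ[R] M) (ψ : M →ₗ[R] M →ₗ[R] M) : M →ₗ[R] M →ₗ[R] M :=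
  ψ.compr₂ D - ψ ∘ₗ D - ψ.compl₂ D

theorem derivedOp_eq_derivedBilin (D : M →ₗ[R] M) (ψ : M →ₗ[R] M →ₗ[R] M) :
    derivedOp D (fun x y => ψ x y) = fun x y => derivedBilin D ψ x y :=
  rfl

theorem derivedOp_apply_of_eigen (D : M → M) (ψ : M →ₗ[R] M →ₗ[R] M) {x y : M} {a b c : R}
    (hx : D x = a • x) (hy : D y = b • y) (hxy : D (ψ x y) = c • ψ x y) :
    derivedOp D (fun x y => ψ x y) x y = (c - a - b) • ψ x y := by
  simp only [derivedOp, hx, hy, hxy, map_smul, LinearMap.smul_apply, sub_smul]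

theorem derivedBilin_derivedBilin_apply_of_eigen (D : M →ₗ[R] M) (ψ : M →ₗ[R] M →ₗ[R] M)
    {x y : M} {a b c : R} (hx : D x = a • x) (hy : D y = b • y) (hxy : D (ψ x y) = c • ψ x y) :
    derivedBilin D (derivedBilin D ψ) x y = (c - a - b) • derivedBilin D ψ x y := by
  have hderived : derivedBilin D ψ x y = (c - a - b) • ψ x y :=
    derivedOp_apply_of_eigen D ψ hx hy hxy
  refine derivedOp_apply_of_eigen D _ hx hy ?_
  rw [hderived, map_smul, hxy, smul_comm]

theorem LinearMap.ext_of_iSup_eq_top₂ {ι N : Type*} [AddCommGroup N] [Module R N]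
    {Q : ι → Submodule R M} (hQ : ⨆ i, Q i = ⊤) {f g : M →ₗ[R] M →ₗ[R] N}
    (h : ∀ i j, ∀ x ∈ Q i, ∀ y ∈ Q j, f x y = g x y) : f = g := by
  rw [Submodule.iSup_eq_span] at hQ
  refine LinearMap.ext_on hQ fun x hx => LinearMap.ext_on hQ fun y hy => ?_
  obtain ⟨i, hxi⟩ := Set.mem_iUnion.mp hx
  obtain ⟨j, hyj⟩ := Set.mem_iUnion.mp hy
  exact h i j x hxi y hyj

end Bilinear

section PeriodicGrading

variable {k L : Type*} [Field k] [LieRing L] [LieAlgebra k L] {n : ℕ} {Q : ℕ → Submodule k L}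
  {D : L →ₗ[k] L}

theorem apply_lie_of_periodic_grading (hQbdd : ∀ i, n ≤ i → Q i = ⊥)
    (hgrade_low : ∀ i j : ℕ, i + j ≤ n - 1 → ∀ x ∈ Q i, ∀ y ∈ Q j, ⁅x, y⁆ ∈ Q (i + j))
    (hgrade_high : ∀ i j : ℕ, i < n → j < n → n ≤ i + j →
      ∀ x ∈ Q i, ∀ y ∈ Q j, ⁅x, y⁆ ∈ Q (i + j - n))
    (hD : ∀ i : ℕ, ∀ x ∈ Q i, D x = (i : k) • x) {i j : ℕ} {x y : L} (hx : x ∈ Q i)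
    (hy : y ∈ Q j) :
    D ⁅x, y⁆ = ((i : k) + j - if n ≤ i + j then (n : k) else 0) • ⁅x, y⁆ := by
  by_cases hi : n ≤ i
  · simp [show x = 0 by simpa [hQbdd i hi] using hx]
  by_cases hj : n ≤ j
  · simp [show y = 0 by simpa [hQbdd j hj] using hy]
  split_ifs with hij
  · rw [hD _ _ (hgrade_high i j (by omega) (by omega) hij x hx y hy), Nat.cast_sub hij,
      Nat.cast_add]
  · rw [hD _ _ (hgrade_low i j (by omega) x hx y hy), Nat.cast_add, sub_zero]

end PeriodicGrading

theorem periodic_grading_near_derivation_general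
    {k : Type*} [Field k] {L : Type*} [LieRing L] [LieAlgebra k L]
    (n : ℕ) (Q : ℕ → Submodule k L)
    (hQbdd : ∀ i, n ≤ i → Q i = ⊥)
    (hdec : DirectSum.IsInternal Q)
    (hgrade_low : ∀ i j : ℕ, i + j ≤ n - 1 →
      ∀ x ∈ Q i, ∀ y ∈ Q j, ⁅x, y⁆ ∈ Q (i + j))
    (hgrade_high : ∀ i j : ℕ, i < n → j < n → n ≤ i + j →
      ∀ x ∈ Q i, ∀ y ∈ Q j, ⁅x, y⁆ ∈ Q (i + j - n))
    (D : L →ₗ[k] L)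
    (hD : ∀ i : ℕ, ∀ x ∈ Q i, D x = (i : k) • x) :
    (∀ i j : ℕ, ∀ x ∈ Q i, ∀ y ∈ Q j,
      (i + j < n → derivedOp ⇑D (fun x y => ⁅x, y⁆) x y = 0) ∧
      (n ≤ i + j → derivedOp ⇑D (fun x y => ⁅x, y⁆) x y = -(n : k) • ⁅x, y⁆)) ∧
    (∀ x y : L,
      (derivedOp ⇑D)^[2] (fun x y => ⁅x, y⁆) x y
        = -(n : k) • derivedOp ⇑D (fun x y => ⁅x, y⁆) x y) := by
  let ψ : L →ₗ[k] L →ₗ[k] L := (LieModule.toEnd k L L : L →ₗ[k] Module.End k L)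
  have hψ : (fun x y : L => ⁅x, y⁆) = fun x y => ψ x y := rfl
  have hbracket {i j : ℕ} {x y : L} (hx : x ∈ Q i) (hy : y ∈ Q j) :=
    apply_lie_of_periodic_grading hQbdd hgrade_low hgrade_high hD hx hy
  have hderived : ∀ i j, ∀ x ∈ Q i, ∀ y ∈ Q j, derivedOp D (fun x y => ⁅x, y⁆) x y =
      -(if n ≤ i + j then (n : k) else 0) • ⁅x, y⁆ := by
    intro i j x hx y hy
    refine (derivedOp_apply_of_eigen D ψ (hD i x hx) (hD j y hy) (hbracket hx hy)).trans ?_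
    congr 1
    ring
  refine ⟨fun i j x hx y hy => ?_, fun x y => ?_⟩
  · rw [hderived i j x hx y hy]
    exact ⟨fun hij => by simp [hij.not_ge], fun hij => by simp [hij]⟩
  · suffices derivedBilin D (derivedBilin D ψ) = -(n : k) • derivedBilin D ψ by
      simp only [Function.iterate_succ, Function.iterate_zero, Function.comp_apply, id_eq, hψ,
        derivedOp_eq_derivedBilin, this, LinearMap.smul_apply]
    refine LinearMap.ext_of_iSup_eq_top₂ hdec.submodule_iSup_eq_top fun i j x hx y hy => ?_
    -- `derivedBilin D ψ x y = s • ⁅x, y⁆` with `s ∈ {0, -n}`, and `s * s = -n * s`.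
    rw [derivedBilin_derivedBilin_apply_of_eigen D ψ (hD i x hx) (hD j y hy) (hbracket hx hy),
      LinearMap.smul_apply, LinearMap.smul_apply,
      show derivedBilin D ψ x y = _ from hderived i j x hx y hy, smul_smul, smul_smul]
    congr 1
    split_ifs <;> ring

/-- Let `q = q₀ ⊕ … ⊕ q_{n−1}` be a ℤₙ-grading of a Lie algebra `q` (n ≥ 2) and let
`D(x) = i·x` for `x ∈ q_i`. Then for `x ∈ q_i`, `y ∈ q_j`: `[x,y]'_D = 0` if `i+j < n`
and `[x,y]'_D = −n·[x,y]` if `i+j ≥ n`; moreover `[·,·]''_D = −n·[·,·]'_D`, so `D` is a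
near-derivation of `q`. -/
theorem periodic_grading_near_derivation
    {k : Type*} [Field k] {L : Type*} [LieRing L] [LieAlgebra k L]
    (n : ℕ) (hn : 2 ≤ n) (Q : ℕ → Submodule k L)
    (hQbdd : ∀ i, n ≤ i → Q i = ⊥)
    (hdec : DirectSum.IsInternal Q)
    (hgrade_low : ∀ i j : ℕ, i + j ≤ n - 1 →
      ∀ x ∈ Q i, ∀ y ∈ Q j, ⁅x, y⁆ ∈ Q (i + j))
    (hgrade_high : ∀ i j : ℕ, i < n → j < n → n ≤ i + j →
      ∀ x ∈ Q i, ∀ y ∈ Q j, ⁅x, y⁆ ∈ Q (i + j - n))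
    (D : L →ₗ[k] L)
    (hD : ∀ i : ℕ, ∀ x ∈ Q i, D x = (i : k) • x) :
    (∀ i j : ℕ, ∀ x ∈ Q i, ∀ y ∈ Q j,
      (i + j < n → derivedOp ⇑D (fun x y => ⁅x, y⁆) x y = 0) ∧
      (n ≤ i + j → derivedOp ⇑D (fun x y => ⁅x, y⁆) x y = -(n : k) • ⁅x, y⁆)) ∧
    (∀ x y : L,
      (derivedOp ⇑D)^[2] (fun x y => ⁅x, y⁆) x y
        = -(n : k) • derivedOp ⇑D (fun x y => ⁅x, y⁆) x y) :=
  periodic_grading_near_derivation_general n Q hQbdd hdec hgrade_low hgrade_high D hD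
end

section
/- Let q be a Lie algebra over a field k whose underlying vector space decomposes as a direct sum q = h ⊕ r where h and r are Lie subalgebras of q. Let D₁ : q → q be the projection onto h along r and D₂ : q → q the projection onto r along h. Then for all x, y ∈ q: [x,y]''_{D₁} = −[x,y]'_{D₁} and [x,y]''_{D₂} = −[x,y]'_{D₂} (so D₁ and D₂ are near-derivations of q), and moreover −[x,y]'_{D₁} − [x,y]'_{D₂} = [x,y]. Explicitly, writing x = h₁ + r₁ and y = h₂ + r₂ with hᵢ ∈ h, rᵢ ∈ r, one has −[x,y]'_{D₁} = [h₁,h₂] + pr_r([h₁,r₂] + [r₁,h₂]), where pr_r is the projection onto r along h. -/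
/-- Let `q = h ⊕ r` be a splitting of a Lie algebra into two subalgebras, `D₁` the
projection onto `h` along `r` and `D₂` the projection onto `r` along `h`. Then
`[·,·]''_{D₁} = −[·,·]'_{D₁}`, `[·,·]''_{D₂} = −[·,·]'_{D₂}` (so `D₁, D₂` are
near-derivations), `−[·,·]'_{D₁} − [·,·]'_{D₂} = [·,·]`, and for `x = h₁ + r₁`,
`y = h₂ + r₂`: `−[x,y]'_{D₁} = [h₁,h₂] + pr_r([h₁,r₂] + [r₁,h₂])`. -/
theorem splitting_near_derivations
    {k : Type*} [Field k] {L : Type*} [LieRing L] [LieAlgebra k L]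
    (H R : LieSubalgebra k L)
    (hcompl : IsCompl H.toSubmodule R.toSubmodule)
    (D₁ D₂ : L →ₗ[k] L)
    (hD₁mem : ∀ x : L, D₁ x ∈ H.toSubmodule)
    (hD₂mem : ∀ x : L, D₂ x ∈ R.toSubmodule)
    (hsum : ∀ x : L, D₁ x + D₂ x = x) :
    (∀ x y : L,
      (derivedOp ⇑D₁)^[2] (fun x y => ⁅x, y⁆) x y
        = -(derivedOp ⇑D₁ (fun x y => ⁅x, y⁆) x y)) ∧
    (∀ x y : L,
      (derivedOp ⇑D₂)^[2] (fun x y => ⁅x, y⁆) x y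
        = -(derivedOp ⇑D₂ (fun x y => ⁅x, y⁆) x y)) ∧
    (∀ x y : L,
      -(derivedOp ⇑D₁ (fun x y => ⁅x, y⁆) x y)
        - derivedOp ⇑D₂ (fun x y => ⁅x, y⁆) x y = ⁅x, y⁆) ∧
    (∀ h₁ ∈ H.toSubmodule, ∀ h₂ ∈ H.toSubmodule,
     ∀ r₁ ∈ R.toSubmodule, ∀ r₂ ∈ R.toSubmodule,
      -(derivedOp ⇑D₁ (fun x y => ⁅x, y⁆) (h₁ + r₁) (h₂ + r₂))
        = ⁅h₁, h₂⁆ + D₂ (⁅h₁, r₂⁆ + ⁅r₁, h₂⁆)) := by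
  have hzero : ∀ z : L, z ∈ H.toSubmodule → z ∈ R.toSubmodule → z = 0 := fun z h1 h2 =>
    Submodule.disjoint_def.mp hcompl.disjoint z h1 h2
  have hHD₂ : ∀ z ∈ H.toSubmodule, D₂ z = 0 := by
    intro z hz
    refine hzero _ ?_ (hD₂mem z)
    have : D₂ z = z - D₁ z := eq_sub_of_add_eq' (hsum z)
    rw [this]
    exact Submodule.sub_mem _ hz (hD₁mem z)
  have hHD₁ : ∀ z ∈ H.toSubmodule, D₁ z = z := by
    intro z hz
    have := hsum z
    rw [hHD₂ z hz, add_zero] at this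
    exact this
  have hRD₁ : ∀ z ∈ R.toSubmodule, D₁ z = 0 := by
    intro z hz
    refine hzero _ (hD₁mem z) ?_
    have : D₁ z = z - D₂ z := eq_sub_of_add_eq (hsum z)
    rw [this]
    exact Submodule.sub_mem _ hz (hD₂mem z)
  have hRD₂ : ∀ z ∈ R.toSubmodule, D₂ z = z := by
    intro z hz
    have := hsum z
    rw [hRD₁ z hz, zero_add] at this
    exact this
  have h11 : ∀ z : L, D₁ (D₁ z) = D₁ z := fun z => hHD₁ _ (hD₁mem z)
  have h21 : ∀ z : L, D₂ (D₁ z) = 0 := fun z => hHD₂ _ (hD₁mem z)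
  have h12 : ∀ z : L, D₁ (D₂ z) = 0 := fun z => hRD₁ _ (hD₂mem z)
  have h22 : ∀ z : L, D₂ (D₂ z) = D₂ z := fun z => hRD₂ _ (hD₂mem z)
  have hlieH : ∀ a ∈ H.toSubmodule, ∀ c ∈ H.toSubmodule, ⁅a, c⁆ ∈ H.toSubmodule := by
    intro a ha c hc
    exact H.lie_mem ha hc
  have hlieR : ∀ b ∈ R.toSubmodule, ∀ d ∈ R.toSubmodule, ⁅b, d⁆ ∈ R.toSubmodule := by
    intro b hb d hd
    exact R.lie_mem hb hd
  have decomp : ∀ x : L, ∃ a ∈ H.toSubmodule, ∃ b ∈ R.toSubmodule, x = a + b :=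
    fun x => ⟨D₁ x, hD₁mem x, D₂ x, hD₂mem x, (hsum x).symm⟩
  refine ⟨?_, ?_, ?_, ?_⟩
  · intro x y
    obtain ⟨a, ha, b, hb, rfl⟩ := decomp x
    obtain ⟨c, hc, d, hd, rfl⟩ := decomp y
    simp only [Function.iterate_succ, Function.iterate_zero, Function.comp_apply, id_eq,
      derivedOp, map_add, map_sub, lie_add, add_lie, lie_sub, sub_lie, map_zero,
      hHD₁ a ha, hHD₁ c hc, hRD₁ b hb, hRD₁ d hd, hHD₂ a ha, hHD₂ c hc, hRD₂ b hb, hRD₂ d hd,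
      hHD₁ _ (hlieH a ha c hc), hHD₂ _ (hlieH a ha c hc),
      hRD₁ _ (hlieR b hb d hd), hRD₂ _ (hlieR b hb d hd),
      h11, h21, h12, h22, zero_lie, lie_zero, add_zero, zero_add, sub_zero, zero_sub]
    abel
  · intro x y
    obtain ⟨a, ha, b, hb, rfl⟩ := decomp x
    obtain ⟨c, hc, d, hd, rfl⟩ := decomp y
    simp only [Function.iterate_succ, Function.iterate_zero, Function.comp_apply, id_eq,
      derivedOp, map_add, map_sub, lie_add, add_lie, lie_sub, sub_lie, map_zero,
      hHD₁ a ha, hHD₁ c hc, hRD₁ b hb, hRD₁ d hd, hHD₂ a ha, hHD₂ c hc, hRD₂ b hb, hRD₂ d hd,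
      hHD₁ _ (hlieH a ha c hc), hHD₂ _ (hlieH a ha c hc),
      hRD₁ _ (hlieR b hb d hd), hRD₂ _ (hlieR b hb d hd),
      h11, h21, h12, h22, zero_lie, lie_zero, add_zero, zero_add, sub_zero, zero_sub]
    abel
  · intro x y
    obtain ⟨a, ha, b, hb, rfl⟩ := decomp x
    obtain ⟨c, hc, d, hd, rfl⟩ := decomp y
    have key : ∀ z : L, D₁ z + D₂ z = z := hsum
    simp only [derivedOp, map_add, lie_add, add_lie,
      hHD₁ a ha, hHD₁ c hc, hRD₁ b hb, hRD₁ d hd, hHD₂ a ha, hHD₂ c hc, hRD₂ b hb, hRD₂ d hd,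
      hHD₁ _ (hlieH a ha c hc), hHD₂ _ (hlieH a ha c hc),
      hRD₁ _ (hlieR b hb d hd), hRD₂ _ (hlieR b hb d hd),
      zero_lie, lie_zero, add_zero, zero_add]
    have k1 := hsum ⁅a, d⁆
    have k2 := hsum ⁅b, c⁆
    linear_combination (norm := abel) -k1 - k2
  · intro a ha c hc b hb d hd
    simp only [derivedOp, map_add, lie_add, add_lie,
      hHD₁ a ha, hHD₁ c hc, hRD₁ b hb, hRD₁ d hd, hHD₂ a ha, hHD₂ c hc, hRD₂ b hb, hRD₂ d hd,
      hHD₁ _ (hlieH a ha c hc), hHD₂ _ (hlieH a ha c hc),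
      hRD₁ _ (hlieR b hb d hd), hRD₂ _ (hlieR b hb d hd),
      zero_lie, lie_zero, add_zero, zero_add]
    have k1 := hsum ⁅a, d⁆
    have k2 := hsum ⁅b, c⁆
    linear_combination (norm := abel) -k1 - k2
end

section
/- Let q be a finite-dimensional Lie algebra over an infinite field k, and let q = ⊕_{i=0}^{p} q_i be a direct sum decomposition into subspaces; for t ∈ k^×, let φ_t ∈ GL(q) be defined by φ_t(x) = t^i·x for x ∈ q_i. Assume φ is m-special for some integer m ≥ 1: there are bilinear maps B₀, B_m : q × q → q with B_m ≠ 0 such that φ_t^{-1}([φ_t(x), φ_t(y)]) = B₀(x,y) + t^m·B_m(x,y) for all t ∈ k^× and all x, y ∈ q. Define D : q → q by D(x) = i·x for x ∈ q_i. Then [·,·]''_D = −m·[·,·]'_D (so D is a near-derivation of q) and [·,·]'_D = −m·B_m; consequently B₀ and B_m are compatible Lie brackets on q. -/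
/-!
Since `φ_t` acts on `qᵢ` by `tⁱ`, for homogeneous `x ∈ qᵢ`, `y ∈ q_j` the identity
`[φ_t x, φ_t y] = φ_t (B₀(x,y) + tᵐ B_m(x,y))` holds for infinitely many `t`, so comparing
coefficients of powers of `t` in each component shows that `B₀(x,y)` has degree `i + j` and
`B_m(x,y)` degree `i + j - m`. Hence `[·,·]'_D` vanishes on `B₀` and equals `-m B_m` on `B_m`,
and since `[·,·] = B₀ + B_m` (take `t = 1`) both identities follow. Similarly
each `B₀ + tᵐ B_m` is a Lie bracket, being conjugate to `[·,·]` by `φ_t`, and comparing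
coefficients in its Jacobi identity shows that `B₀` and `B_m` are Lie brackets.
-/

open DirectSum

theorem Finsupp.eq_zero_of_forall_sum_pow_smul_eq_zero {k V : Type*} [Field k] [Infinite k]
    [AddCommGroup V] [Module k V] (c : ℕ →₀ V)
    (h : ∀ t : kˣ, (c.sum fun e v => (t : k) ^ e • v) = 0) : c = 0 := by
  ext e
  rw [Finsupp.coe_zero, Pi.zero_apply, ← Module.forall_dual_apply_eq_zero_iff k]
  intro f
  let P : Polynomial k := c.sum fun e v => Polynomial.monomial e (f v)
  have hP : P = 0 := by
    refine P.eq_zero_of_infinite_isRoot ((Set.finite_singleton 0).infinite_compl.mono ?_)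
    intro t (ht : t ≠ 0)
    simpa [P, Finsupp.sum, Polynomial.eval_finsetSum, mul_comm] using
      congrArg f (h (Units.mk0 t ht))
  by_cases hce : c e = 0
  · simp [hce]
  · simpa [P, Finsupp.sum, Polynomial.coeff_monomial, hce] using
      congrArg (Polynomial.coeff · e) hP

section Decomposition

variable {ι R M : Type*} [DecidableEq ι] [Semiring R] [AddCommMonoid M] [Module R M]
  (ℳ : ι → Submodule R M) [Decomposition ℳ]

theorem DirectSum.coe_decompose_apply_of_smul_on_pieces {F : Type*} [FunLike F M M]
    [AddMonoidHomClass F M M] {f : F} {c : ι → R}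
    (hf : ∀ i, ∀ x ∈ ℳ i, f x = c i • x) (x : M) (n : ι) :
    (decompose ℳ (f x) n : M) = c n • (decompose ℳ x n : M) := by
  induction x using Decomposition.inductionOn ℳ with
  | zero => simp
  | @homogeneous i x =>
    have hfx : f x ∈ ℳ i := hf i x x.2 ▸ (ℳ i).smul_mem _ x.2
    by_cases hin : i = n
    · subst hin
      rw [decompose_of_mem_same ℳ hfx, decompose_of_mem_same ℳ x.2, hf i x x.2]
    · rw [decompose_of_mem_ne ℳ hfx hin, decompose_of_mem_ne ℳ x.2 hin, smul_zero]
  | add x y hx hy => simp [hx, hy, smul_add]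

theorem DirectSum.apply_eq_smul_of_decompose_eq_zero {F : Type*} [FunLike F M M]
    [AddMonoidHomClass F M M] {f : F} {c : ι → R}
    (hf : ∀ i, ∀ x ∈ ℳ i, f x = c i • x) {x : M} {r : R}
    (hx : ∀ i, c i ≠ r → (decompose ℳ x i : M) = 0) : f x = r • x := by
  refine (decompose ℳ).injective (DFinsupp.ext fun i => Subtype.ext ?_)
  rw [coe_decompose_apply_of_smul_on_pieces ℳ hf, decompose_smul, DirectSum.smul_apply,
    Submodule.coe_smul]
  by_cases hi : c i = r
  · rw [hi]
  · rw [hx i hi, smul_zero, smul_zero]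

end Decomposition

theorem derivedOp_add {V F : Type*} [AddCommGroup V] [FunLike F V V] [AddMonoidHomClass F V V]
    (D : F) (ψ χ : V → V → V) :
    derivedOp D (fun x y => ψ x y + χ x y) =
      fun x y => derivedOp D ψ x y + derivedOp D χ x y := by
  funext x y
  simp only [derivedOp, map_add]
  abel

theorem derivedOp_smul {R V : Type*} [Semiring R] [AddCommGroup V] [Module R V]
    (D : V →ₗ[R] V) (r : R) (ψ : V → V → V) :
    derivedOp D (fun x y => r • ψ x y) = fun x y => r • derivedOp D ψ x y := by
  funext x y
  simp only [derivedOp, map_smul, smul_sub]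

theorem derivedOp_eq_smul_of_forall_mem {R M : Type*} [CommRing R] [AddCommGroup M]
    [Module R M] (ℳ : ℕ → Submodule R M) [Decomposition ℳ] {D : M →ₗ[R] M}
    (hD : ∀ i, ∀ x ∈ ℳ i, D x = (i : R) • x) {F : M →ₗ[R] M →ₗ[R] M} {c : R}
    (hF : ∀ i j, ∀ x ∈ ℳ i, ∀ y ∈ ℳ j, D (F x y) = ((i : R) + j + c) • F x y) (x y : M) :
    derivedOp D (fun x y => F x y) x y = c • F x y := by
  have key : F.compr₂ D - F ∘ₗ D - F.compl₂ D = c • F := by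
    refine decompose_lhom_ext ℳ fun i => LinearMap.ext fun x =>
      decompose_lhom_ext ℳ fun j => LinearMap.ext fun y => ?_
    simp only [LinearMap.comp_apply, Submodule.subtype_apply, LinearMap.sub_apply,
      LinearMap.compr₂_apply, LinearMap.compl₂_apply, LinearMap.smul_apply]
    rw [hD i x x.2, hD j y y.2, hF i j x x.2 y y.2, map_smul, LinearMap.smul_apply, map_smul]
    module
  simpa [derivedOp] using congr($key x y)

theorem isLieBracket_lie (L : Type*) [LieRing L] : IsLieBracket fun x y : L => ⁅x, y⁆ := by
  refine ⟨lie_self, fun x y z => ?_⟩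
  show ⁅⁅x, y⁆, z⁆ + ⁅⁅y, z⁆, x⁆ + ⁅⁅z, x⁆, y⁆ = 0
  rw [← lie_skew ⁅x, y⁆, ← lie_skew ⁅y, z⁆, ← lie_skew ⁅z, x⁆, ← neg_add, ← neg_add, neg_eq_zero,
    ← lie_jacobi z x y]

theorem IsLieBracket.conj {R V : Type*} [Semiring R] [AddCommGroup V] [Module R V]
    {B : V → V → V} (hB : IsLieBracket B) (e : V ≃ₗ[R] V) :
    IsLieBracket fun x y => e.symm (B (e x) (e y)) := by
  refine ⟨fun x => by simp only [hB.1, map_zero], fun x y z => ?_⟩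
  simp only [LinearEquiv.apply_symm_apply, ← map_add, hB.2, map_zero]

theorem isLieBracket_of_forall_isLieBracket_add_pow_smul {k V : Type*} [Field k] [Infinite k]
    [AddCommGroup V] [Module k V] {m : ℕ} (hm : m ≠ 0) (B₀ B₁ : V →ₗ[k] V →ₗ[k] V)
    (h : ∀ t : kˣ, IsLieBracket fun x y => B₀ x y + (t : k) ^ m • B₁ x y) :
    IsLieBracket (fun x y => B₀ x y) ∧ IsLieBracket (fun x y => B₁ x y) := by
  have h2m : 2 * m ≠ m := by omega
  have hself (x : V) : B₀ x x = 0 ∧ B₁ x x = 0 := by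
    have hc := Finsupp.eq_zero_of_forall_sum_pow_smul_eq_zero
      (Finsupp.single 0 (B₀ x x) + Finsupp.single m (B₁ x x)) fun t => by
        simpa [Finsupp.sum_add_index', add_smul] using (h t).1 x
    exact ⟨by simpa [Finsupp.single_apply, hm] using congr($hc 0),
      by simpa [Finsupp.single_apply, hm] using congr($hc m)⟩
  have hjacobi (x y z : V) :
      B₀ (B₀ x y) z + B₀ (B₀ y z) x + B₀ (B₀ z x) y = 0 ∧
      B₁ (B₁ x y) z + B₁ (B₁ y z) x + B₁ (B₁ z x) y = 0 := by
    have hc := Finsupp.eq_zero_of_forall_sum_pow_smul_eq_zero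
      (Finsupp.single 0 (B₀ (B₀ x y) z + B₀ (B₀ y z) x + B₀ (B₀ z x) y) +
        Finsupp.single m (B₀ (B₁ x y) z + B₁ (B₀ x y) z + B₀ (B₁ y z) x + B₁ (B₀ y z) x +
          B₀ (B₁ z x) y + B₁ (B₀ z x) y) +
        Finsupp.single (2 * m) (B₁ (B₁ x y) z + B₁ (B₁ y z) x + B₁ (B₁ z x) y)) fun t => by
        have := (h t).2 x y z
        simp only [map_add, map_smul, LinearMap.add_apply, LinearMap.smul_apply] at this
        simp only [Finsupp.sum_add_index', Finsupp.sum_single_index, smul_zero, smul_add,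
          implies_true]
        linear_combination (norm := module) this
    exact ⟨by simpa [Finsupp.single_apply, hm] using congr($hc 0),
      by simpa [Finsupp.single_apply, hm, h2m] using congr($hc (2 * m))⟩
  exact ⟨⟨fun x => (hself x).1, fun x y z => (hjacobi x y z).1⟩,
    ⟨fun x => (hself x).2, fun x y z => (hjacobi x y z).2⟩⟩

section Special

variable {k L : Type*} [Field k] [LieRing L] [LieAlgebra k L] {Q : ℕ → Submodule k L}
  [Decomposition Q] {φ : kˣ → L ≃ₗ[k] L} {m : ℕ} {B₀ Bm : L →ₗ[k] L →ₗ[k] L}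

theorem lie_eq_add_of_special (hφ : ∀ (t : kˣ) (i : ℕ), ∀ x ∈ Q i, φ t x = ((t : k) ^ i) • x)
    (hspecial : ∀ (t : kˣ) (x y : L),
      (φ t).symm ⁅φ t x, φ t y⁆ = B₀ x y + ((t : k) ^ m) • Bm x y) (x y : L) :
    ⁅x, y⁆ = B₀ x y + Bm x y := by
  have hφ₁ : ((φ 1 : L ≃ₗ[k] L) : L →ₗ[k] L) = LinearMap.id :=
    decompose_lhom_ext Q fun i => LinearMap.ext fun x => by simp [hφ 1 i x x.2]
  have hφ₁' (z : L) : φ 1 z = z := congr($hφ₁ z)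
  simpa [hφ₁', LinearEquiv.symm_apply_eq] using hspecial 1 x y

theorem decompose_special_eq_zero [Infinite k]
    (hφ : ∀ (t : kˣ) (i : ℕ), ∀ x ∈ Q i, φ t x = ((t : k) ^ i) • x)
    (hspecial : ∀ (t : kˣ) (x y : L),
      (φ t).symm ⁅φ t x, φ t y⁆ = B₀ x y + ((t : k) ^ m) • Bm x y)
    (hm : m ≠ 0) {i j : ℕ} {x y : L} (hx : x ∈ Q i) (hy : y ∈ Q j) (n : ℕ) :
    (n ≠ i + j → (decompose Q (B₀ x y) n : L) = 0) ∧
      (n + m ≠ i + j → (decompose Q (Bm x y) n : L) = 0) := by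
  set a := (decompose Q (B₀ x y) n : L)
  set b := (decompose Q (Bm x y) n : L)
  have hpoly (t : kˣ) : (t : k) ^ n • (a + (t : k) ^ m • b) = (t : k) ^ (i + j) • (a + b) := by
    have h : φ t (B₀ x y + (t : k) ^ m • Bm x y) = (t : k) ^ (i + j) • (B₀ x y + Bm x y) := by
      rw [← hspecial, LinearEquiv.apply_symm_apply, hφ t i x hx, hφ t j y hy, smul_lie, lie_smul,
        smul_smul, ← pow_add, lie_eq_add_of_special hφ hspecial]
    have := congr((decompose Q $h n : L))
    rwa [coe_decompose_apply_of_smul_on_pieces Q (hφ t), decompose_smul, decompose_add,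
      decompose_add, decompose_smul] at this
  have hc := Finsupp.eq_zero_of_forall_sum_pow_smul_eq_zero
    (Finsupp.single n a + Finsupp.single (n + m) b + Finsupp.single (i + j) (-(a + b))) fun t => by
      simp only [Finsupp.sum_add_index', Finsupp.sum_single_index, smul_zero, smul_add,
        implies_true]
      linear_combination (norm := module) hpoly t
  constructor
  · intro hn
    simpa [Finsupp.single_apply, hm, Ne.symm hn] using congr($hc n)
  · intro hn
    simpa [Finsupp.single_apply, hm, Ne.symm hn] using congr($hc (n + m))

theorem derivedOp_B₀_eq_zero [Infinite k]
    (hφ : ∀ (t : kˣ) (i : ℕ), ∀ x ∈ Q i, φ t x = ((t : k) ^ i) • x)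
    (hspecial : ∀ (t : kˣ) (x y : L),
      (φ t).symm ⁅φ t x, φ t y⁆ = B₀ x y + ((t : k) ^ m) • Bm x y)
    (hm : m ≠ 0) {D : L →ₗ[k] L} (hD : ∀ i : ℕ, ∀ x ∈ Q i, D x = (i : k) • x) (x y : L) :
    derivedOp D (fun x y => B₀ x y) x y = 0 := by
  refine (derivedOp_eq_smul_of_forall_mem Q hD (c := 0) (fun i j x hx y hy => ?_) x y).trans
    (zero_smul k _)
  refine apply_eq_smul_of_decompose_eq_zero Q hD fun n hn =>
    (decompose_special_eq_zero hφ hspecial hm hx hy n).1 ?_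
  rintro rfl
  simp at hn

theorem derivedOp_Bm_eq_neg_smul [Infinite k]
    (hφ : ∀ (t : kˣ) (i : ℕ), ∀ x ∈ Q i, φ t x = ((t : k) ^ i) • x)
    (hspecial : ∀ (t : kˣ) (x y : L),
      (φ t).symm ⁅φ t x, φ t y⁆ = B₀ x y + ((t : k) ^ m) • Bm x y)
    (hm : m ≠ 0) {D : L →ₗ[k] L} (hD : ∀ i : ℕ, ∀ x ∈ Q i, D x = (i : k) • x) (x y : L) :
    derivedOp D (fun x y => Bm x y) x y = -(m : k) • Bm x y := by
  refine derivedOp_eq_smul_of_forall_mem Q hD (fun i j x hx y hy => ?_) x y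
  refine apply_eq_smul_of_decompose_eq_zero Q hD fun n hn =>
    (decompose_special_eq_zero hφ hspecial hm hx hy n).2 fun h => hn ?_
  rw [← Nat.cast_add, ← h, Nat.cast_add]
  ring

end Special

theorem m_special_near_derivation_general
    {k : Type*} [Field k] [Infinite k] {L : Type*} [LieRing L] [LieAlgebra k L]
    (Q : ℕ → Submodule k L)
    (hdec : DirectSum.IsInternal Q)
    (φ : kˣ → (L ≃ₗ[k] L))
    (hφ : ∀ (t : kˣ) (i : ℕ), ∀ x ∈ Q i, φ t x = ((t : k) ^ i) • x)
    (m : ℕ) (hm : 1 ≤ m)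
    (B₀ Bm : L →ₗ[k] L →ₗ[k] L)
    (hspecial : ∀ (t : kˣ) (x y : L),
      (φ t).symm ⁅φ t x, φ t y⁆ = B₀ x y + ((t : k) ^ m) • Bm x y)
    (D : L →ₗ[k] L)
    (hD : ∀ i : ℕ, ∀ x ∈ Q i, D x = (i : k) • x) :
    (∀ x y : L,
      (derivedOp ⇑D)^[2] (fun x y => ⁅x, y⁆) x y
        = -(m : k) • derivedOp ⇑D (fun x y => ⁅x, y⁆) x y) ∧
    (∀ x y : L, derivedOp ⇑D (fun x y => ⁅x, y⁆) x y = -(m : k) • Bm x y) ∧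
    IsLieBracket (fun x y => B₀ x y) ∧
    IsLieBracket (fun x y => Bm x y) ∧
    IsLieBracket (fun x y => B₀ x y + Bm x y) := by
  let := hdec.chooseDecomposition
  have hbr : (fun x y : L => ⁅x, y⁆) = fun x y => B₀ x y + Bm x y :=
    funext₂ (lie_eq_add_of_special hφ hspecial)
  have hderBm := derivedOp_Bm_eq_neg_smul hφ hspecial (by omega) hD
  have hder : derivedOp ⇑D (fun x y => ⁅x, y⁆) = fun x y => -(m : k) • Bm x y := by
    funext x y
    simp only [hbr, derivedOp_add, derivedOp_B₀_eq_zero hφ hspecial (by omega) hD, hderBm,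
      zero_add]
  have hfamily (t : kˣ) : IsLieBracket fun x y => B₀ x y + (t : k) ^ m • Bm x y := by
    simpa only [hspecial] using (isLieBracket_lie L).conj (φ t)
  obtain ⟨hLieB₀, hLieBm⟩ :=
    isLieBracket_of_forall_isLieBracket_add_pow_smul (by omega) B₀ Bm hfamily
  refine ⟨fun x y => ?_, fun x y => congr_fun₂ hder x y, hLieB₀, hLieBm, hbr ▸ isLieBracket_lie L⟩
  simp only [Function.iterate_succ_apply, Function.iterate_zero_apply, hder, derivedOp_smul,
    hderBm]

/-- For an `m`-special one-parameter group `φ` coming from a decomposition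
`q = ⊕_{i=0}^{p} q_i` (so `φ_t⁻¹[φ_t x, φ_t y] = B₀(x,y) + tᵐ·B_m(x,y)`), the operator
`D(x) = i·x` for `x ∈ q_i` satisfies `[·,·]''_D = −m·[·,·]'_D` (so `D` is a
near-derivation) and `[·,·]'_D = −m·B_m`; consequently `B₀` and `B_m` are compatible Lie
brackets. -/
theorem m_special_near_derivation
    {k : Type*} [Field k] [Infinite k] {L : Type*} [LieRing L] [LieAlgebra k L]
    [FiniteDimensional k L]
    (p : ℕ) (Q : ℕ → Submodule k L)
    (hQbdd : ∀ i, p < i → Q i = ⊥)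
    (hdec : DirectSum.IsInternal Q)
    (φ : kˣ → (L ≃ₗ[k] L))
    (hφ : ∀ (t : kˣ) (i : ℕ), ∀ x ∈ Q i, φ t x = ((t : k) ^ i) • x)
    (m : ℕ) (hm : 1 ≤ m)
    (B₀ Bm : L →ₗ[k] L →ₗ[k] L) (hBm : Bm ≠ 0)
    (hspecial : ∀ (t : kˣ) (x y : L),
      (φ t).symm ⁅φ t x, φ t y⁆ = B₀ x y + ((t : k) ^ m) • Bm x y)
    (D : L →ₗ[k] L)
    (hD : ∀ i : ℕ, ∀ x ∈ Q i, D x = (i : k) • x) :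
    (∀ x y : L,
      (derivedOp ⇑D)^[2] (fun x y => ⁅x, y⁆) x y
        = -(m : k) • derivedOp ⇑D (fun x y => ⁅x, y⁆) x y) ∧
    (∀ x y : L, derivedOp ⇑D (fun x y => ⁅x, y⁆) x y = -(m : k) • Bm x y) ∧
    IsLieBracket (fun x y => B₀ x y) ∧
    IsLieBracket (fun x y => Bm x y) ∧
    IsLieBracket (fun x y => B₀ x y + Bm x y) :=
  m_special_near_derivation_general Q hdec φ hφ m hm B₀ Bm hspecial D hD
end

section
/- Let q be a finite-dimensional Lie algebra over an infinite field k, q = ⊕_{i=0}^{p} q_i a direct sum of subspaces with q_p ≠ 0, and φ_t ∈ GL(q) defined by φ_t(x) = t^i·x for x ∈ q_i. Assume φ is m-special for some integer m ≥ 1: there are bilinear maps B₀, B_m : q × q → q with B_m ≠ 0 such that φ_t^{-1}([φ_t(x), φ_t(y)]) = B₀(x,y) + t^m·B_m(x,y) for all t ∈ k^× and all x, y ∈ q. Then: (1) if [q_p, q_p] ≠ 0, then p ≤ m; (2) if in addition q_p is a Lie subalgebra of q and [q_p, q_p] ≠ 0, then p = m. -/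
/-!
On `q_p` the map `φ_t` is multiplication by `t^p`, so for `x, y ∈ q_p` the `q_j`-component of the
special identity reads `t^(2p) [x,y]_j = t^j B₀(x,y)_j + t^(m+j) B_m(x,y)_j` for all `t ∈ kˣ`.
Over an infinite field distinct monomials are linearly independent, hence `[x,y]_j = 0` unless
`2p = j` or `2p = m + j`. If `p > m`, neither happens for `j ≤ p`, so `[x,y] = 0`. If `q_p` is a
subalgebra, `[x,y]` is its own `q_p`-component, which forces `p = m` or `p = 0`; and for `p = 0`
the group `φ` is trivial, so comparing coefficients of `t^m` gives `B_m = 0`.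
-/

open Polynomial DirectSum

theorem eq_zero_of_forall_units_pow_smul_eq {k V : Type*} [Field k] [Infinite k] [AddCommGroup V]
    [Module k V] {a b c : ℕ} (hab : a ≠ b) (hac : a ≠ c) {u v w : V}
    (h : ∀ t : kˣ, (t : k) ^ a • u = (t : k) ^ b • v + (t : k) ^ c • w) : u = 0 := by
  rw [← Module.forall_dual_apply_eq_zero_iff k]
  intro g
  set P : k[X] := C (g u) * X ^ a - C (g v) * X ^ b - C (g w) * X ^ c
  have hP : P = 0 := by
    refine P.eq_zero_of_infinite_isRoot ((Set.finite_singleton 0).infinite_compl.mono ?_)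
    intro t (ht : t ≠ 0)
    have := congrArg g (h (Units.mk0 t ht))
    simp only [Units.val_mk0, map_add, map_smul, smul_eq_mul] at this
    simp only [P, Set.mem_ofPred_eq, IsRoot, eval_sub, eval_mul, eval_C, eval_pow, eval_X]
    linear_combination this
  simpa [P, coeff_C_mul_X_pow, hab, hac] using congrArg (coeff · a) hP

section Decomposition

variable {ι R M : Type*} [DecidableEq ι] [Semiring R] [AddCommMonoid M] [Module R M]
  (Q : ι → Submodule R M) [Decomposition Q]

theorem DirectSum.eq_of_decompose_coe_eq {x y : M}
    (h : ∀ i, (decompose Q x i : M) = decompose Q y i) : x = y :=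
  (decompose Q).injective (DFinsupp.ext fun i => Subtype.ext (h i))

theorem DirectSum.decompose_coe_eq_zero_of_eq_bot {j : ι} (hj : Q j = ⊥) (x : M) :
    (decompose Q x j : M) = 0 :=
  (Submodule.eq_bot_iff _).mp hj _ (decompose Q x j).2

theorem DirectSum.decompose_map_of_forall_mem_apply_eq_smul (f : M →ₗ[R] M) (c : ι → R)
    (hf : ∀ i, ∀ x ∈ Q i, f x = c i • x) (x : M) (j : ι) :
    (decompose Q (f x) j : M) = c j • (decompose Q x j : M) := by
  induction x using Decomposition.inductionOn Q with
  | zero => simp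
  | @homogeneous i x =>
    have hfx : f x ∈ Q i := hf i x x.2 ▸ Submodule.smul_mem _ _ x.2
    by_cases hij : i = j
    · subst hij
      rw [decompose_of_mem_same Q hfx, decompose_of_mem_same Q x.2, hf i x x.2]
    · rw [decompose_of_mem_ne Q hfx hij, decompose_of_mem_ne Q x.2 hij, smul_zero]
  | add x y hx hy => simp [decompose_add, hx, hy, smul_add]

end Decomposition

section Special

variable {k L : Type*} [Field k] [LieRing L] [LieAlgebra k L] {φ : kˣ → (L ≃ₗ[k] L)}

theorem decompose_lie_eq_zero_of_special [Infinite k] (Q : ℕ → Submodule k L) [Decomposition Q]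
    (hφ : ∀ (t : kˣ) (i : ℕ), ∀ x ∈ Q i, φ t x = ((t : k) ^ i) • x) {m : ℕ}
    {B₀ Bm : L →ₗ[k] L →ₗ[k] L}
    (hspecial : ∀ (t : kˣ) (x y : L),
      (φ t).symm ⁅φ t x, φ t y⁆ = B₀ x y + ((t : k) ^ m) • Bm x y)
    {p j : ℕ} {x y : L} (hx : x ∈ Q p) (hy : y ∈ Q p) (hj : 2 * p ≠ j) (hmj : 2 * p ≠ m + j) :
    (decompose Q ⁅x, y⁆ j : L) = 0 := by
  refine eq_zero_of_forall_units_pow_smul_eq (k := k) hj hmj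
    (v := (decompose Q (B₀ x y) j : L)) (w := (decompose Q (Bm x y) j : L)) fun t => ?_
  have hbracket : ⁅φ t x, φ t y⁆ = (t : k) ^ (2 * p) • ⁅x, y⁆ := by
    rw [hφ t p x hx, hφ t p y hy, smul_lie, lie_smul, smul_smul, ← pow_add, two_mul]
  have hBφ : ⁅φ t x, φ t y⁆ = φ t (B₀ x y + (t : k) ^ m • Bm x y) := by
    rw [← hspecial, LinearEquiv.apply_symm_apply]
  have hcomp := congrArg (fun z => (decompose Q z j : L)) (hbracket.symm.trans hBφ)
  simp only [decompose_smul, DirectSum.smul_apply, Submodule.coe_smul] at hcomp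
  rw [hcomp, ← LinearEquiv.coe_coe,
    decompose_map_of_forall_mem_apply_eq_smul Q _ _ (hφ t), decompose_add, DirectSum.add_apply,
    Submodule.coe_add, decompose_smul, DirectSum.smul_apply, Submodule.coe_smul, smul_add,
    smul_smul, ← pow_add, add_comm j m]

theorem apply_eq_self_of_forall_pos_eq_bot (Q : ℕ → Submodule k L) [Decomposition Q]
    (hφ : ∀ (t : kˣ) (i : ℕ), ∀ x ∈ Q i, φ t x = ((t : k) ^ i) • x)
    (hQ : ∀ i, 0 < i → Q i = ⊥) (t : kˣ) (w : L) : φ t w = w := by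
  refine eq_of_decompose_coe_eq Q fun i => ?_
  rw [← LinearEquiv.coe_coe, decompose_map_of_forall_mem_apply_eq_smul Q _ _ (hφ t)]
  rcases Nat.eq_zero_or_pos i with rfl | hi
  · rw [pow_zero, one_smul]
  · rw [decompose_coe_eq_zero_of_eq_bot Q (hQ i hi), smul_zero]

theorem eq_zero_of_special_of_forall_apply_eq_self [Infinite k] {m : ℕ} (hm : m ≠ 0)
    {B₀ Bm : L →ₗ[k] L →ₗ[k] L}
    (hspecial : ∀ (t : kˣ) (x y : L),
      (φ t).symm ⁅φ t x, φ t y⁆ = B₀ x y + ((t : k) ^ m) • Bm x y)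
    (hid : ∀ t w, φ t w = w) : Bm = 0 := by
  ext x y
  refine eq_zero_of_forall_units_pow_smul_eq (k := k) (b := 0) (c := 0) hm hm
    (v := ⁅x, y⁆ - B₀ x y) (w := 0) fun t => ?_
  have h := hspecial t x y
  rw [hid, hid, LinearEquiv.symm_apply_eq, hid] at h
  rw [h]
  simp

end Special

theorem m_special_top_degree_general
    {k : Type*} [Field k] [Infinite k] {L : Type*} [LieRing L] [LieAlgebra k L]
    (p : ℕ) (Q : ℕ → Submodule k L)
    (hQbdd : ∀ i, p < i → Q i = ⊥)
    (hdec : DirectSum.IsInternal Q)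
    (φ : kˣ → (L ≃ₗ[k] L))
    (hφ : ∀ (t : kˣ) (i : ℕ), ∀ x ∈ Q i, φ t x = ((t : k) ^ i) • x)
    (m : ℕ) (hm : 1 ≤ m)
    (B₀ Bm : L →ₗ[k] L →ₗ[k] L) (hBm : Bm ≠ 0)
    (hspecial : ∀ (t : kˣ) (x y : L),
      (φ t).symm ⁅φ t x, φ t y⁆ = B₀ x y + ((t : k) ^ m) • Bm x y) :
    ((∃ x ∈ Q p, ∃ y ∈ Q p, ⁅x, y⁆ ≠ 0) → p ≤ m) ∧
    ((∀ x ∈ Q p, ∀ y ∈ Q p, ⁅x, y⁆ ∈ Q p) →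
      (∃ x ∈ Q p, ∃ y ∈ Q p, ⁅x, y⁆ ≠ 0) → p = m) := by
  let := hdec.chooseDecomposition
  refine ⟨?_, ?_⟩
  · rintro ⟨x, hx, y, hy, hxy⟩
    by_contra! hmp
    refine hxy (eq_of_decompose_coe_eq Q fun j => ?_)
    rw [decompose_zero, DirectSum.zero_apply, ZeroMemClass.coe_zero]
    rcases le_or_gt j p with hjp | hpj
    · exact decompose_lie_eq_zero_of_special Q hφ hspecial hx hy (by omega) (by omega)
    · exact decompose_coe_eq_zero_of_eq_bot Q (hQbdd j hpj) _
  · rintro hsub ⟨x, hx, y, hy, hxy⟩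
    rcases Nat.eq_zero_or_pos p with rfl | hp
    · exact absurd (eq_zero_of_special_of_forall_apply_eq_self (by omega) hspecial
        (apply_eq_self_of_forall_pos_eq_bot Q hφ hQbdd)) hBm
    · by_contra hpm
      refine hxy ?_
      rw [← decompose_of_mem_same Q (hsub x hx y hy)]
      exact decompose_lie_eq_zero_of_special Q hφ hspecial hx hy (by omega) (by omega)

/-- For an `m`-special one-parameter group `φ` coming from a decomposition
`q = ⊕_{i=0}^{p} q_i` with `q_p ≠ 0`: (1) if `[q_p, q_p] ≠ 0` then `p ≤ m`;
(2) if moreover `q_p` is a (non-abelian) Lie subalgebra, then `p = m`. -/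
theorem m_special_top_degree
    {k : Type*} [Field k] [Infinite k] {L : Type*} [LieRing L] [LieAlgebra k L]
    [FiniteDimensional k L]
    (p : ℕ) (Q : ℕ → Submodule k L)
    (hQbdd : ∀ i, p < i → Q i = ⊥) (hQp : Q p ≠ ⊥)
    (hdec : DirectSum.IsInternal Q)
    (φ : kˣ → (L ≃ₗ[k] L))
    (hφ : ∀ (t : kˣ) (i : ℕ), ∀ x ∈ Q i, φ t x = ((t : k) ^ i) • x)
    (m : ℕ) (hm : 1 ≤ m)
    (B₀ Bm : L →ₗ[k] L →ₗ[k] L) (hBm : Bm ≠ 0)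
    (hspecial : ∀ (t : kˣ) (x y : L),
      (φ t).symm ⁅φ t x, φ t y⁆ = B₀ x y + ((t : k) ^ m) • Bm x y) :
    ((∃ x ∈ Q p, ∃ y ∈ Q p, ⁅x, y⁆ ≠ 0) → p ≤ m) ∧
    ((∀ x ∈ Q p, ∀ y ∈ Q p, ⁅x, y⁆ ∈ Q p) →
      (∃ x ∈ Q p, ∃ y ∈ Q p, ⁅x, y⁆ ≠ 0) → p = m) :=
  m_special_top_degree_general p Q hQbdd hdec φ hφ m hm B₀ Bm hBm hspecial
end

section
/- Let q be a Lie algebra over a field k, let e ∈ q, and set D = (ad e)², i.e. D(x) = [e,[e,x]]. Then for every n ≥ 0 and all x, y ∈ q the n-th derived bracket satisfies [x,y]^{(n)}_D = 2^n·[(ad e)^n x, (ad e)^n y]; in particular [x,y]'_D = 2·[[e,x],[e,y]]. -/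
set_option maxRecDepth 4000


/-- For `D = (ad e)²` one has `[x,y]^{(n)}_D = 2ⁿ·[(ad e)ⁿ x, (ad e)ⁿ y]`; in particular
`[x,y]'_D = 2·[[e,x],[e,y]]`. -/
theorem ad_square_nth_derived
    {k : Type*} [Field k] {L : Type*} [LieRing L] [LieAlgebra k L] (e : L) :
    (∀ (n : ℕ) (x y : L),
      (derivedOp (fun v => ⁅e, ⁅e, v⁆⁆))^[n] (fun x y => ⁅x, y⁆) x y
        = (2 : k) ^ n • ⁅(fun v => ⁅e, v⁆)^[n] x, (fun v => ⁅e, v⁆)^[n] y⁆) ∧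
    (∀ x y : L,
      derivedOp (fun v => ⁅e, ⁅e, v⁆⁆) (fun x y => ⁅x, y⁆) x y
        = (2 : k) • ⁅⁅e, x⁆, ⁅e, y⁆⁆) := by
  have key : ∀ (n : ℕ) (x y : L),
      (derivedOp (fun v => ⁅e, ⁅e, v⁆⁆))^[n] (fun x y => ⁅x, y⁆) x y
        = (2 : k) ^ n • ⁅(fun v => ⁅e, v⁆)^[n] x, (fun v => ⁅e, v⁆)^[n] y⁆ := by
    intro n
    induction n with
    | zero => intro x y; simp
    | succ n ih =>
      intro x y
      rw [Function.iterate_succ_apply', derivedOp, ih, ih, ih]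
      have hc : ∀ z : L, (fun v => ⁅e, v⁆)^[n] ⁅e, ⁅e, z⁆⁆
          = ⁅e, ⁅e, (fun v => ⁅e, v⁆)^[n] z⁆⁆ := by
        intro z
        have := Function.Commute.iterate_self (fun v : L => ⁅e, v⁆) n
        calc (fun v => ⁅e, v⁆)^[n] ⁅e, ⁅e, z⁆⁆
            = (fun v : L => ⁅e, v⁆)^[n + 2] z := by
              simp [Function.iterate_succ_apply]
          _ = ⁅e, ⁅e, (fun v => ⁅e, v⁆)^[n] z⁆⁆ := by
              simp [Function.iterate_succ_apply']
      rw [hc, hc]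
      set A := (fun v => ⁅e, v⁆)^[n] x
      set B := (fun v => ⁅e, v⁆)^[n] y
      have hex : ⁅e, ⁅e, ⁅A, B⁆⁆⁆
          = ⁅⁅e, ⁅e, A⁆⁆, B⁆ + ⁅⁅e, A⁆, ⁅e, B⁆⁆ + (⁅⁅e, A⁆, ⁅e, B⁆⁆ + ⁅A, ⁅e, ⁅e, B⁆⁆⁆) := by
        rw [leibniz_lie e A B, lie_add, leibniz_lie e ⁅e, A⁆ B, leibniz_lie e A ⁅e, B⁆]
      rw [Function.iterate_succ_apply', Function.iterate_succ_apply', lie_smul, lie_smul, hex,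
        pow_succ, mul_smul, two_smul]
      simp only [smul_add]
      abel
  exact ⟨key, fun x y => by simpa using key 1 x y⟩
end

section
/- Let q be a Lie algebra over a field k of characteristic ≠ 2, let e ∈ q, and set D = (ad e)², i.e. D(x) = [e,[e,x]]. Then D is a quasi-derivation of q (i.e. [·,·]''_D = 0) if and only if [u, v] = 0 for all u, v in the image of D. -/
private lemma ad_sq_key {L : Type*} [LieRing L] (e x y : L) :
    ⁅e, ⁅e, ⁅x, y⁆⁆⁆ = ⁅⁅e, ⁅e, x⁆⁆, y⁆ + 2 • ⁅⁅e, x⁆, ⁅e, y⁆⁆ + ⁅x, ⁅e, ⁅e, y⁆⁆⁆ := by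
  rw [leibniz_lie e x y, lie_add, leibniz_lie e ⁅e, x⁆ y, leibniz_lie e x ⁅e, y⁆, two_smul]
  abel

private lemma ad_sq_iter {L : Type*} [LieRing L] (e x y : L) :
    (derivedOp (fun v => ⁅e, ⁅e, v⁆⁆))^[2] (fun x y => ⁅x, y⁆) x y
      = 4 • ⁅⁅e, ⁅e, x⁆⁆, ⁅e, ⁅e, y⁆⁆⁆ := by
  have h1 : (derivedOp (fun v : L => ⁅e, ⁅e, v⁆⁆)) (fun x y => ⁅x, y⁆)
      = fun x y => 2 • ⁅⁅e, x⁆, ⁅e, y⁆⁆ := by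
    funext a b
    simp only [derivedOp, ad_sq_key e a b]
    abel
  rw [Function.iterate_succ, Function.iterate_one, Function.comp_apply, h1]
  simp only [derivedOp, two_smul, lie_add]
  rw [ad_sq_key e ⁅e, x⁆ ⁅e, y⁆]
  abel

/-- For `D = (ad e)²` over a field of characteristic ≠ 2, `D` is a quasi-derivation of the
Lie algebra iff the image of `D` is abelian. -/
theorem ad_square_quasi_iff
    {k : Type*} [Field k] {L : Type*} [LieRing L] [LieAlgebra k L]
    (h2 : (2 : k) ≠ 0) (e : L) :
    ((derivedOp (fun v => ⁅e, ⁅e, v⁆⁆))^[2] (fun x y => ⁅x, y⁆)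
        = fun _ _ => (0 : L)) ↔
      ∀ u ∈ Set.range (fun v : L => ⁅e, ⁅e, v⁆⁆),
        ∀ w ∈ Set.range (fun v : L => ⁅e, ⁅e, v⁆⁆), ⁅u, w⁆ = 0 := by
  constructor
  · intro h u hu w hw
    obtain ⟨x, rfl⟩ := hu
    obtain ⟨y, rfl⟩ := hw
    have hx := congrFun (congrFun h x) y
    rw [ad_sq_iter] at hx
    have h4 : ((4 : ℕ) : k) • ⁅⁅e, ⁅e, x⁆⁆, ⁅e, ⁅e, y⁆⁆⁆ = 0 := by
      rw [Nat.cast_smul_eq_nsmul]; exact hx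
    have h4k : ((4 : ℕ) : k) ≠ 0 := by
      have : ((4 : ℕ) : k) = 2 * 2 := by norm_num
      rw [this]; exact mul_ne_zero h2 h2
    exact (smul_eq_zero.mp h4).resolve_left h4k
  · intro h
    funext x y
    rw [ad_sq_iter]
    rw [h _ ⟨x, rfl⟩ _ ⟨y, rfl⟩, smul_zero]
end

section
/- Let g be a finite-dimensional semisimple Lie algebra over an algebraically closed field of characteristic 0, and let e ∈ g satisfy (ad e)³ = 0. Then D = (ad e)² is a quasi-derivation of g, i.e. the second derived bracket [·,·]''_D is identically zero. Equivalently, [[e,[e,x]], [e,[e,y]]] = 0 for all x, y ∈ g. -/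
/-- In a finite-dimensional semisimple Lie algebra `g` over an algebraically closed field
of characteristic zero, if `(ad e)³ = 0` then `D = (ad e)²` is a quasi-derivation:
`[·,·]''_D ≡ 0`, equivalently `[[e,[e,x]], [e,[e,y]]] = 0` for all `x, y`. -/
theorem ad_square_quasi_of_ad_cube_zero
    {k : Type*} [Field k] [IsAlgClosed k] [CharZero k]
    {g : Type*} [LieRing g] [LieAlgebra k g] [FiniteDimensional k g]
    [LieAlgebra.IsSemisimple k g]
    (e : g) (he : ∀ x : g, ⁅e, ⁅e, ⁅e, x⁆⁆⁆ = 0) :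
    (∀ x y : g,
      (derivedOp (fun v => ⁅e, ⁅e, v⁆⁆))^[2] (fun x y => ⁅x, y⁆) x y = 0) ∧
    (∀ x y : g, ⁅⁅e, ⁅e, x⁆⁆, ⁅e, ⁅e, y⁆⁆⁆ = 0) := by
  have cancel : ∀ (n : ℕ) (z : g), n • z = 0 → (n : k) ≠ 0 → z = 0 := by
    intro n z h hn
    rw [← Nat.cast_smul_eq_nsmul k] at h
    exact (smul_eq_zero.mp h).resolve_left hn
  -- second iterate of ad e applied to a bracket (Leibniz twice)
  have t2 : ∀ u v : g, ⁅e, ⁅e, ⁅u, v⁆⁆⁆ =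
      ⁅⁅e, ⁅e, u⁆⁆, v⁆ + ⁅⁅e, u⁆, ⁅e, v⁆⁆ + (⁅⁅e, u⁆, ⁅e, v⁆⁆ + ⁅u, ⁅e, ⁅e, v⁆⁆⁆) := by
    intro u v
    rw [leibniz_lie e u v, lie_add, leibniz_lie e ⁅e, u⁆ v, leibniz_lie e u ⁅e, v⁆]
  -- the mixed sum vanishes
  have hS : ∀ u v : g, ⁅⁅e, ⁅e, u⁆⁆, ⁅e, v⁆⁆ + ⁅⁅e, u⁆, ⁅e, ⁅e, v⁆⁆⁆ = 0 := by
    intro u v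
    have h0 : ⁅e, ⁅e, ⁅e, ⁅u, v⁆⁆⁆⁆ = (0 : g) := he ⁅u, v⁆
    rw [t2 u v] at h0
    simp only [lie_add, leibniz_lie e ⁅e, ⁅e, u⁆⁆ v, leibniz_lie e ⁅e, u⁆ ⁅e, v⁆,
      leibniz_lie e u ⁅e, ⁅e, v⁆⁆, he u, he v, zero_lie, lie_zero, zero_add, add_zero] at h0
    apply cancel 3
    · rw [show (3 : ℕ) • (⁅⁅e, ⁅e, u⁆⁆, ⁅e, v⁆⁆ + ⁅⁅e, u⁆, ⁅e, ⁅e, v⁆⁆⁆) =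
        ⁅⁅e, ⁅e, u⁆⁆, ⁅e, v⁆⁆ + ⁅⁅e, u⁆, ⁅e, ⁅e, v⁆⁆⁆ +
        (⁅⁅e, ⁅e, u⁆⁆, ⁅e, v⁆⁆ + ⁅⁅e, u⁆, ⁅e, ⁅e, v⁆⁆⁆) +
        (⁅⁅e, ⁅e, u⁆⁆, ⁅e, v⁆⁆ + ⁅⁅e, u⁆, ⁅e, ⁅e, v⁆⁆⁆) from by abel]
      rw [← h0]; abel
    · norm_num
  -- key identity
  have key : ∀ u v : g, ⁅⁅e, ⁅e, u⁆⁆, ⁅e, ⁅e, v⁆⁆⁆ = 0 := by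
    intro u v
    have h1 : ⁅e, ⁅⁅e, ⁅e, u⁆⁆, ⁅e, v⁆⁆ + ⁅⁅e, u⁆, ⁅e, ⁅e, v⁆⁆⁆⁆ = (0 : g) := by
      rw [hS u v, lie_zero]
    rw [lie_add, leibniz_lie e ⁅e, ⁅e, u⁆⁆ ⁅e, v⁆, leibniz_lie e ⁅e, u⁆ ⁅e, ⁅e, v⁆⁆,
      he u, he v, zero_lie, lie_zero, zero_add, add_zero] at h1
    apply cancel 2
    · rw [two_smul, ← h1]
    · norm_num
  refine ⟨?_, key⟩
  intro x y
  simp only [Function.iterate_succ, Function.iterate_zero, Function.comp_apply, id_eq,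
    derivedOp]
  rw [t2 x y, t2 ⁅e, ⁅e, x⁆⁆ y, t2 x ⁅e, ⁅e, y⁆⁆]
  simp only [he x, he y, zero_lie, lie_zero, zero_add, add_zero]
  rw [show ⁅⁅e, ⁅e, x⁆⁆, y⁆ + ⁅⁅e, x⁆, ⁅e, y⁆⁆ + (⁅⁅e, x⁆, ⁅e, y⁆⁆ + ⁅x, ⁅e, ⁅e, y⁆⁆⁆) -
      ⁅⁅e, ⁅e, x⁆⁆, y⁆ - ⁅x, ⁅e, ⁅e, y⁆⁆⁆ = ⁅⁅e, x⁆, ⁅e, y⁆⁆ + ⁅⁅e, x⁆, ⁅e, y⁆⁆ from by abel,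
    lie_add, lie_add, t2 ⁅e, x⁆ ⁅e, y⁆]
  simp only [he x, he y, zero_lie, lie_zero, zero_add, add_zero, key x y, sub_zero, sub_self,
    add_zero, zero_sub, neg_zero]
end

section
/- Let g be a finite-dimensional semisimple Lie algebra over an algebraically closed field of characteristic 0, let e ∈ g satisfy (ad e)³ = 0, and set D = (ad e)². Then the Lie algebra g_D = (g, [·,·]'_D) is two-step nilpotent: [[x,y]'_D, z]'_D = 0 for all x, y, z ∈ g. Explicitly, [[e, [[e,x],[e,y]] ], [e,z]] = 0 for all x, y, z ∈ g. -/
/-- Key lemma: if `(ad e)³ = 0` over characteristic zero, then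
`⁅e, ⁅⁅e,x⁆, ⁅e,y⁆⁆⁆ = 0`. -/
theorem ade_sq_bracket_eq_zero
    {k : Type*} [Field k] [CharZero k]
    {g : Type*} [LieRing g] [LieAlgebra k g]
    (e : g) (he : ∀ x : g, ⁅e, ⁅e, ⁅e, x⁆⁆⁆ = 0) (x y : g) :
    ⁅e, ⁅⁅e, x⁆, ⁅e, y⁆⁆⁆ = 0 := by
  have h := he ⁅x, y⁆
  rw [leibniz_lie e x y, lie_add, lie_add,
      leibniz_lie e ⁅e,x⁆ y, leibniz_lie e x ⁅e,y⁆,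
      lie_add, lie_add,
      leibniz_lie e ⁅e,⁅e,x⁆⁆ y, leibniz_lie e ⁅e,x⁆ ⁅e,y⁆,
      leibniz_lie e x ⁅e,⁅e,y⁆⁆, he x, he y, zero_lie, lie_zero] at h
  have h3 : (3:k) • ⁅e, ⁅⁅e, x⁆, ⁅e, y⁆⁆⁆ = 0 := by
    rw [leibniz_lie e ⁅e,x⁆ ⁅e,y⁆]
    linear_combination (norm := module) (1:k) • h
  simpa using h3

/-- In a finite-dimensional semisimple Lie algebra `g` over an algebraically closed field
of characteristic zero, if `(ad e)³ = 0` and `D = (ad e)²`, then `g_D = (g, [·,·]'_D)` is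
two-step nilpotent: `[[x,y]'_D, z]'_D = 0` for all `x, y, z`; explicitly,
`[[e, [[e,x],[e,y]]], [e,z]] = 0`. -/
theorem derived_bracket_two_step_nilpotent
    {k : Type*} [Field k] [IsAlgClosed k] [CharZero k]
    {g : Type*} [LieRing g] [LieAlgebra k g] [FiniteDimensional k g]
    [LieAlgebra.IsSemisimple k g]
    (e : g) (he : ∀ x : g, ⁅e, ⁅e, ⁅e, x⁆⁆⁆ = 0) :
    (∀ x y z : g,
      derivedOp (fun v => ⁅e, ⁅e, v⁆⁆) (fun x y => ⁅x, y⁆)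
        (derivedOp (fun v => ⁅e, ⁅e, v⁆⁆) (fun x y => ⁅x, y⁆) x y) z = 0) ∧
    (∀ x y z : g, ⁅⁅e, ⁅⁅e, x⁆, ⁅e, y⁆⁆⁆, ⁅e, z⁆⁆ = 0) := by
  have key : ∀ x y : g, ⁅e, ⁅⁅e, x⁆, ⁅e, y⁆⁆⁆ = 0 :=
    ade_sq_bracket_eq_zero (k := k) e he
  constructor
  · intro x y z
    simp only [derivedOp]
    -- let w be the inner derived bracket; show w = 2 • ⁅⁅e,x⁆,⁅e,y⁆⁆
    set w : g := ⁅e, ⁅e, ⁅x, y⁆⁆⁆ - ⁅⁅e, ⁅e, x⁆⁆, y⁆ - ⁅x, ⁅e, ⁅e, y⁆⁆⁆ with hw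
    have hw2 : w = (2:k) • ⁅⁅e, x⁆, ⁅e, y⁆⁆ := by
      rw [hw, leibniz_lie e x y, lie_add, leibniz_lie e ⁅e,x⁆ y,
        leibniz_lie e x ⁅e,y⁆]
      module
    -- ⁅e, w⁆ = 0
    have haw : ⁅e, w⁆ = 0 := by
      rw [hw2, lie_smul, key, smul_zero]
    have haaw : ⁅e, ⁅e, w⁆⁆ = 0 := by rw [haw, lie_zero]
    have h1 : ⁅e, ⁅w, z⁆⁆ = ⁅w, ⁅e, z⁆⁆ := by
      rw [leibniz_lie e w z, haw, zero_lie, zero_add]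
    have h2 : ⁅e, ⁅e, ⁅w, z⁆⁆⁆ = ⁅w, ⁅e, ⁅e, z⁆⁆⁆ := by
      rw [h1, leibniz_lie e w ⁅e,z⁆, haw, zero_lie, zero_add]
    rw [h2, haaw, zero_lie]
    abel
  · intro x y z
    rw [key x y, zero_lie]
end

section
/- Let q be a Lie algebra over a field k of characteristic 0 and let N : q → q be a Nijenhuis operator. Then for every integer n ≥ 0 and all x, y ∈ q: Σ_{k+i+j=n} (−1)^k · (n! / (k!·i!·j!)) · N^k([N^i x, N^j y]) = [N^n x, y] + [x, N^n y] − N^n([x,y]), where the sum ranges over all triples (k,i,j) of nonnegative integers with k + i + j = n and N^0 = id. -/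
/-!
For maps `f : L → L → L` let `A`, `B`, `C` apply `N` to the first argument, to the second
argument and to the value. They commute, `C^k A^i B^j` sends the bracket to
`(x, y) ↦ N^k [N^i x, N^j y]`, and the Nijenhuis condition says that `(A - C)(B - C)` kills the
bracket. Since `(a - c)(b - c)` divides `(a + b - c)^n - a^n - b^n + c^n` in any commutative ring,
`(A + B - C)^n` and `A^n + B^n - C^n` agree on the bracket; expanding the former by the binomial
theorem gives the left-hand side.
-/

open Finset
open scoped Nat

theorem sub_mul_sub_dvd_add_sub_pow_sub_pow_sub_pow_add_pow {R : Type*} [CommRing R]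
    (a b c : R) (n : ℕ) :
    (a - c) * (b - c) ∣ (a + b - c) ^ n - a ^ n - b ^ n + c ^ n := by
  induction n with
  | zero => simp
  | succ n ih =>
    have recurrence : (a + b - c) ^ (n + 1) - a ^ (n + 1) - b ^ (n + 1) + c ^ (n + 1)
        = (a + b - c) * ((a + b - c) ^ n - a ^ n - b ^ n + c ^ n)
          + ((a - c) * (b ^ n - c ^ n) + (b - c) * (a ^ n - c ^ n)) := by ring
    rw [recurrence]
    refine dvd_add (ih.mul_left _) (dvd_add ?_ ?_)
    · exact mul_dvd_mul_left _ (sub_dvd_pow_sub_pow b c n)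
    · rw [mul_comm (a - c)]
      exact mul_dvd_mul_left _ (sub_dvd_pow_sub_pow a c n)

open scoped IsMulCommutative in
theorem add_sub_pow_smul_of_sub_mul_sub_smul_eq_zero {R M : Type*} [Ring R] [AddCommGroup M]
    [Module R M] {a b c : R} (hab : Commute a b) (hac : Commute a c) (hbc : Commute b c)
    {m : M} (hm : ((a - c) * (b - c)) • m = 0) (n : ℕ) :
    (a + b - c) ^ n • m = (a ^ n + b ^ n - c ^ n) • m := by
  let S := Subring.closure ({a, b, c} : Set R)
  have hcomm : ∀ x ∈ ({a, b, c} : Set R), ∀ y ∈ ({a, b, c} : Set R), Commute x y := by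
    simp only [Set.mem_insert_iff, Set.mem_singleton_iff]
    rintro x (rfl | rfl | rfl) y (rfl | rfl | rfl) <;>
      first | exact Commute.refl _ | assumption | exact Commute.symm ‹_›
  have : IsMulCommutative S :=
    Subring.isMulCommutative_closure fun x hx y hy => (hcomm x hx y hy).eq
  obtain ⟨d, hd⟩ := sub_mul_sub_dvd_add_sub_pow_sub_pow_sub_pow_add_pow
    (⟨a, Subring.subset_closure (by simp)⟩ : S) ⟨b, Subring.subset_closure (by simp)⟩
    ⟨c, Subring.subset_closure (by simp)⟩ n
  rw [mul_comm] at hd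
  have hd' : (a + b - c) ^ n - a ^ n - b ^ n + c ^ n = d * ((a - c) * (b - c)) :=
    congrArg Subtype.val hd
  rw [← sub_eq_zero, ← sub_smul,
    show (a + b - c) ^ n - (a ^ n + b ^ n - c ^ n) = (a + b - c) ^ n - a ^ n - b ^ n + c ^ n
      by abel, hd', mul_smul, hm, smul_zero]

theorem Nat.factorial_div_factorial_mul_factorial_mul_factorial {a b c n : ℕ}
    (h : a + b + c = n) :
    n ! / (a ! * b ! * c !) = n.choose a * (b + c).choose b := by
  have hn : n.choose a * a ! * (b + c)! = n ! := by
    simpa [show n - a = b + c by omega] using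
      Nat.choose_mul_factorial_mul_factorial (show a ≤ n by omega)
  have hbc : (b + c).choose b * b ! * c ! = (b + c)! := by
    simpa using Nat.choose_mul_factorial_mul_factorial (Nat.le_add_right b c)
  refine Nat.div_eq_of_eq_mul_left (by positivity) ?_
  rw [← hn, ← hbc]
  ring

namespace LinearMap

variable {R : Type*} [CommRing R] {L : Type*} [AddCommGroup L] [Module R L] (N : L →ₗ[R] L)

def precompFst : Module.End R (L → L → L) where
  toFun f x y := f (N x) y
  map_add' _ _ := rfl
  map_smul' _ _ := rfl

def precompSnd : Module.End R (L → L → L) where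
  toFun f x y := f x (N y)
  map_add' _ _ := rfl
  map_smul' _ _ := rfl

def postcomp : Module.End R (L → L → L) where
  toFun f x y := N (f x y)
  map_add' f g := by funext x y; exact N.map_add _ _
  map_smul' c f := by funext x y; exact N.map_smul c _

theorem precompFst_pow_apply (n : ℕ) (f : L → L → L) (x y : L) :
    (precompFst N ^ n) f x y = f (N^[n] x) y := by
  induction n generalizing f with
  | zero => rfl
  | succ n ih => rw [pow_succ, Module.End.mul_apply, ih, Function.iterate_succ_apply']; rfl

theorem precompSnd_pow_apply (n : ℕ) (f : L → L → L) (x y : L) :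
    (precompSnd N ^ n) f x y = f x (N^[n] y) := by
  induction n generalizing f with
  | zero => rfl
  | succ n ih => rw [pow_succ, Module.End.mul_apply, ih, Function.iterate_succ_apply']; rfl

theorem postcomp_pow_apply (n : ℕ) (f : L → L → L) (x y : L) :
    (postcomp N ^ n) f x y = N^[n] (f x y) := by
  induction n generalizing f with
  | zero => rfl
  | succ n ih => rw [pow_succ', Module.End.mul_apply, Function.iterate_succ_apply', ← ih]; rfl

theorem commute_precompFst_precompSnd : Commute (precompFst N) (precompSnd N) :=
  LinearMap.ext fun _ => rfl

theorem commute_precompFst_postcomp : Commute (precompFst N) (postcomp N) :=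
  LinearMap.ext fun _ => rfl

theorem commute_precompSnd_postcomp : Commute (precompSnd N) (postcomp N) :=
  LinearMap.ext fun _ => rfl

theorem precompFst_sub_postcomp_mul_precompSnd_sub_postcomp_apply (f : L → L → L) (x y : L) :
    ((precompFst N - postcomp N) * (precompSnd N - postcomp N)) f x y
      = f (N x) (N y) - N (f (N x) y) - N (f x (N y)) + N (N (f x y)) := by
  simp only [Module.End.mul_apply, sub_apply, Pi.sub_apply, precompFst, precompSnd, postcomp,
    coe_mk, AddHom.coe_mk, map_sub]
  abel

theorem precompFst_add_precompSnd_sub_postcomp_pow_apply (n : ℕ) (f : L → L → L) (x y : L) :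
    ((precompFst N + precompSnd N - postcomp N) ^ n) f x y
      = ∑ p ∈ antidiagonal n, ∑ q ∈ antidiagonal p.2,
          ((-1 : R) ^ p.1 * ((n.choose p.1 * p.2.choose q.1 : ℕ) : R))
            • N^[p.1] (f (N^[q.1] x) (N^[q.2] y)) := by
  have hsum : precompFst N + precompSnd N - postcomp N
      = -postcomp N + (precompFst N + precompSnd N) := by abel
  have hc : Commute (-postcomp N) (precompFst N + precompSnd N) :=
    (commute_precompFst_postcomp N).symm.neg_left.add_right
      (commute_precompSnd_postcomp N).symm.neg_left
  have hneg (m : ℕ) : (-postcomp N) ^ m = (-1 : R) ^ m • postcomp N ^ m := by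
    rw [← neg_one_smul R (postcomp N), smul_pow]
  rw [hsum, hc.add_pow']
  simp only [(commute_precompFst_precompSnd N).add_pow', sum_apply, Finset.sum_apply,
    smul_apply, Pi.smul_apply, Module.End.mul_apply, Finset.mul_sum, Finset.smul_sum]
  refine sum_congr rfl fun p _ => sum_congr rfl fun q _ => ?_
  simp only [hneg, map_nsmul, smul_apply, Pi.smul_apply, postcomp_pow_apply,
    precompFst_pow_apply, precompSnd_pow_apply]
  module

end LinearMap

open LinearMap in
theorem nijenhuis_exponential_identity_general
    {k : Type*} [Field k] {L : Type*} [LieRing L] [LieAlgebra k L]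
    (N : L →ₗ[k] L)
    (hN : ∀ x y : L, N (⁅N x, y⁆ + ⁅x, N y⁆ - N ⁅x, y⁆) = ⁅N x, N y⁆) :
    ∀ (n : ℕ) (x y : L),
      ∑ p ∈ Finset.HasAntidiagonal.antidiagonal n, ∑ q ∈ Finset.HasAntidiagonal.antidiagonal p.2,
        ((-1 : k) ^ p.1
          * ((Nat.factorial n
              / (Nat.factorial p.1 * Nat.factorial q.1 * Nat.factorial q.2) : ℕ) : k))
          • (⇑N)^[p.1] ⁅(⇑N)^[q.1] x, (⇑N)^[q.2] y⁆
        = ⁅(⇑N)^[n] x, y⁆ + ⁅x, (⇑N)^[n] y⁆ - (⇑N)^[n] ⁅x, y⁆ := by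
  intro n x y
  have torsion : ((precompFst N - postcomp N) * (precompSnd N - postcomp N)) •
      (⁅·, ·⁆ : L → L → L) = 0 := by
    funext x y
    rw [Module.End.smul_def, precompFst_sub_postcomp_mul_precompSnd_sub_postcomp_apply,
      Pi.zero_apply, Pi.zero_apply, ← hN, map_sub, map_add]
    abel
  calc _
      = ((precompFst N + precompSnd N - postcomp N) ^ n •
          (⁅·, ·⁆ : L → L → L)) x y := by
        rw [Module.End.smul_def, precompFst_add_precompSnd_sub_postcomp_pow_apply]
        refine sum_congr rfl fun p hp => sum_congr rfl fun q hq => ?_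
        rw [HasAntidiagonal.mem_antidiagonal] at hp hq
        rw [Nat.factorial_div_factorial_mul_factorial_mul_factorial (by omega), hq]
    _ = ((precompFst N ^ n + precompSnd N ^ n - postcomp N ^ n) •
          (⁅·, ·⁆ : L → L → L)) x y := by
        rw [add_sub_pow_smul_of_sub_mul_sub_smul_eq_zero (commute_precompFst_precompSnd N)
          (commute_precompFst_postcomp N) (commute_precompSnd_postcomp N) torsion]
    _ = _ := by
        simp only [Module.End.smul_def, LinearMap.add_apply, LinearMap.sub_apply, Pi.add_apply,
          Pi.sub_apply, precompFst_pow_apply, precompSnd_pow_apply, postcomp_pow_apply]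

/-- For a Nijenhuis operator `N` on a Lie algebra over a field of characteristic zero,
for every `n ≥ 0`:
`Σ_{k+i+j=n} (−1)^k (n!/(k!·i!·j!)) N^k([N^i x, N^j y])
  = [N^n x, y] + [x, N^n y] − N^n([x,y])`. -/
theorem nijenhuis_exponential_identity
    {k : Type*} [Field k] [CharZero k] {L : Type*} [LieRing L] [LieAlgebra k L]
    (N : L →ₗ[k] L)
    (hN : ∀ x y : L, N (⁅N x, y⁆ + ⁅x, N y⁆ - N ⁅x, y⁆) = ⁅N x, N y⁆) :
    ∀ (n : ℕ) (x y : L),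
      ∑ p ∈ Finset.HasAntidiagonal.antidiagonal n, ∑ q ∈ Finset.HasAntidiagonal.antidiagonal p.2,
        ((-1 : k) ^ p.1
          * ((Nat.factorial n
              / (Nat.factorial p.1 * Nat.factorial q.1 * Nat.factorial q.2) : ℕ) : k))
          • (⇑N)^[p.1] ⁅(⇑N)^[q.1] x, (⇑N)^[q.2] y⁆
        = ⁅(⇑N)^[n] x, y⁆ + ⁅x, (⇑N)^[n] y⁆ - (⇑N)^[n] ⁅x, y⁆ :=
  nijenhuis_exponential_identity_general N hN
end

section
/- Let A be an associative algebra over a field k of characteristic ≠ 2 equipped with a k-linear involution * satisfying (xy)* = y*·x* and (x*)* = x. Let a ∈ A with a* = a, define D_a : A → A by D_a(u) = (au + ua)/2, and let [u,v] = uv − vu be the commutator Lie bracket on A. Then for all x, y ∈ A with x* = −x and y* = −y, the Nijenhuis torsion of D_a with respect to [·,·] satisfies T_{D_a}(x,y) = −(1/4)·[[a,x],[a,y]]. -/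
/-- The ringCommutator `[u,v] = uv − vu` in an associative ring. -/
def ringCommutator {A : Type*} [Ring A] (u v : A) : A := u * v - v * u

/-- The operator `D_a(u) = (au + ua)/2`. -/
def jordanMul (k : Type*) [Field k] {A : Type*} [Ring A] [Algebra k A]
    (a : A) : A → A :=
  fun u => (2 : k)⁻¹ • (a * u + u * a)

/-- The Nijenhuis torsion of a map `D` with respect to the ringCommutator bracket:
`T_D(x,y) = [Dx,Dy] + D(D([x,y]) − [Dx,y] − [x,Dy])`. -/
def commTorsion {A : Type*} [Ring A] (D : A → A) : A → A → A :=
  fun x y =>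
    ringCommutator (D x) (D y)
      + D (D (ringCommutator x y) - ringCommutator (D x) y - ringCommutator x (D y))

/-- Let `A` be an associative algebra over a field `k` of characteristic ≠ 2 with a
`k`-linear involution `s` ((xy)* = y*x*, (x*)* = x), let `a ∈ A` satisfy `s a = a`, and
`D_a(u) = (au + ua)/2`. Then for all `x, y ∈ A` with `s x = −x` and `s y = −y`, the
Nijenhuis torsion of `D_a` with respect to the ringCommutator bracket satisfies
`T_{D_a}(x,y) = −(1/4)·[[a,x],[a,y]]`. -/
theorem torsion_of_jordan_multiplication
    {k : Type*} [Field k] (h2 : (2 : k) ≠ 0)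
    {A : Type*} [Ring A] [Algebra k A]
    (s : A →ₗ[k] A)
    (hmul : ∀ x y : A, s (x * y) = s y * s x)
    (hinv : ∀ x : A, s (s x) = x)
    (a : A) (ha : s a = a) :
    ∀ x y : A, s x = -x → s y = -y →
      commTorsion (jordanMul k a) x y
        = -((4 : k)⁻¹ • ringCommutator (ringCommutator a x) (ringCommutator a y)) := by
  intro x y _ _
  simp only [commTorsion, jordanMul, ringCommutator, smul_add, smul_sub,
    mul_smul_comm, smul_mul_assoc, smul_smul, mul_sub, sub_mul, mul_add, add_mul,
    mul_assoc]
  have h4 : ((2:k)⁻¹ * (2:k)⁻¹) = (4:k)⁻¹ := by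
    rw [← mul_inv]; norm_num
  rw [h4]
  module
end
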